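/- arXiv:math/0608686 — 9 statements merged into one kernel-verified Lean document; each statement's English description precedes it below -/
import Mathlib

section
/- Let (X,d) be a pointed metric space, let ε > 0, and let X₁ be a discrete ε-net in X. For every integer m ≥ 0 the following are equivalent: (a) every asymptotically Lipschitz norm-preserving function f' : A → ℝ^{m+1} defined on a subset A ⊂ X extends to an asymptotically Lipschitz norm-preserving function F' : X → ℝ^{m+1}; (b) every Lipschitz norm-preserving function f' : A → ℝ^{m+1} defined on a subset A ⊂ X₁ extends to a Lipschitz norm-preserving function F' : X₁ → ℝ^{m+1}. -/
open Classical in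
/-- Rescale `v` to have norm `r` (using unit vector `e` when `v = 0`). -/
noncomputable def resc {E : Type*} [NormedAddCommGroup E] [NormedSpace ℝ E]
    (e : E) (r : ℝ) (v : E) : E :=
  if v = 0 then r • e else (r / ‖v‖) • v

lemma norm_resc {E : Type*} [NormedAddCommGroup E] [NormedSpace ℝ E]
    {e : E} (he : ‖e‖ = 1) {r : ℝ} (hr : 0 ≤ r) (v : E) : ‖resc e r v‖ = r := by
  unfold resc
  split_ifs with h
  · simp [norm_smul, he, abs_of_nonneg hr]
  · have hv : ‖v‖ ≠ 0 := norm_ne_zero_iff.2 h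
    rw [norm_smul, Real.norm_eq_abs, abs_div, abs_of_nonneg hr, abs_of_nonneg (norm_nonneg v)]
    field_simp

lemma norm_resc_sub {E : Type*} [NormedAddCommGroup E] [NormedSpace ℝ E]
    {e : E} (he : ‖e‖ = 1) {r : ℝ} (hr : 0 ≤ r) (v : E) :
    ‖resc e r v - v‖ = |r - ‖v‖| := by
  unfold resc
  split_ifs with h
  · simp [h, norm_smul, he, abs_of_nonneg hr]
  · have hv : ‖v‖ ≠ 0 := norm_ne_zero_iff.2 h
    have h2 : (r / ‖v‖) • v - v = (r / ‖v‖ - 1) • v := by rw [sub_smul, one_smul]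
    rw [h2, norm_smul, Real.norm_eq_abs]
    rw [show r / ‖v‖ - 1 = (r - ‖v‖) / ‖v‖ by field_simp, abs_div,
      abs_of_nonneg (norm_nonneg v)]
    field_simp

/-- An asymptotically Lipschitz map on a δ-discrete set is Lipschitz. -/
lemma asymp_to_lip {X E : Type*} [MetricSpace X] [MetricSpace E] {S : Set X} {δ : ℝ}
    (hδ : 0 < δ) (hdisc : ∀ x ∈ S, ∀ y ∈ S, x ≠ y → δ ≤ dist x y)
    {g : S → E} {lam M : ℝ} (hlam : 0 ≤ lam) (hM : 0 ≤ M)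
    (hg : ∀ x y : S, dist (g x) (g y) ≤ lam * dist (x : X) (y : X) + M) :
    ∃ lam' : ℝ, 0 ≤ lam' ∧ ∀ x y : S, dist (g x) (g y) ≤ lam' * dist x y := by
  refine ⟨lam + M / δ, by positivity, fun x y => ?_⟩
  rcases eq_or_ne x y with rfl | hne
  · simp
  · have hcoe : (x : X) ≠ (y : X) := fun h => hne (Subtype.ext h)
    have hd : δ ≤ dist (x : X) (y : X) := hdisc x x.2 y y.2 hcoe
    have h1 : M ≤ (M / δ) * dist (x : X) (y : X) := by
      rw [div_mul_eq_mul_div, le_div_iff₀ hδ]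
      exact mul_le_mul_of_nonneg_left hd hM
    calc dist (g x) (g y) ≤ lam * dist (x : X) (y : X) + M := hg x y
      _ ≤ lam * dist (x : X) (y : X) + (M / δ) * dist (x : X) (y : X) := by linarith
      _ = (lam + M / δ) * dist (x : X) (y : X) := by ring
      _ = (lam + M / δ) * dist x y := by rw [Subtype.dist_eq]

/-- A function between metric spaces is *asymptotically Lipschitz* if it is
`(λ, M)`-asymptotically Lipschitz for some `λ, M ≥ 0`. -/
def AsympLip {X Y : Type*} [MetricSpace X] [MetricSpace Y] (f : X → Y) : Prop :=
  ∃ lam M : ℝ, 0 ≤ lam ∧ 0 ≤ M ∧ ∀ x y, dist (f x) (f y) ≤ lam * dist x y + M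

/-- A function between metric spaces is *Lipschitz* if it is `λ`-Lipschitz for some `λ ≥ 0`. -/
def LipFun {X Y : Type*} [MetricSpace X] [MetricSpace Y] (f : X → Y) : Prop :=
  ∃ lam : ℝ, 0 ≤ lam ∧ ∀ x y, dist (f x) (f y) ≤ lam * dist x y

/-- if `X₁` is a discrete `ε`-net in a pointed metric space `X`, then
extendability of asymptotically Lipschitz norm-preserving maps `A ⊂ X → ℝ^{m+1}` over `X`
is equivalent to extendability of Lipschitz norm-preserving maps `A ⊂ X₁ → ℝ^{m+1}` over `X₁`. -/
theorem stmt_0 {X : Type*} [MetricSpace X] (x₀ : X) (ε : ℝ) (hε : 0 < ε)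
    (X₁ : Set X)
    (hdisc : ∃ δ > 0, ∀ x ∈ X₁, ∀ y ∈ X₁, x ≠ y → δ ≤ dist x y)
    (hnet : ∀ x : X, ∃ y ∈ X₁, dist x y < ε)
    (m : ℕ) :
    (∀ (A : Set X) (f : A → EuclideanSpace ℝ (Fin (m + 1))),
        (∀ a : A, ‖f a‖ = dist (a : X) x₀) → AsympLip f →
        ∃ F : X → EuclideanSpace ℝ (Fin (m + 1)),
          (∀ a : A, F (a : X) = f a) ∧ (∀ x : X, ‖F x‖ = dist x x₀) ∧ AsympLip F)
    ↔
    (∀ (A : Set X), A ⊆ X₁ → ∀ (f : A → EuclideanSpace ℝ (Fin (m + 1))),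
        (∀ a : A, ‖f a‖ = dist (a : X) x₀) → LipFun f →
        ∃ F : X₁ → EuclideanSpace ℝ (Fin (m + 1)),
          (∀ (x : X) (hA : x ∈ A) (h₁ : x ∈ X₁), F ⟨x, h₁⟩ = f ⟨x, hA⟩) ∧
          (∀ x : X₁, ‖F x‖ = dist (x : X) x₀) ∧ LipFun F) := by
  obtain ⟨δ, hδ, hdd⟩ := hdisc
  constructor
  · -- (a) → (b)
    intro ha A hAX f hnorm hlip
    obtain ⟨lam, hlam, hf⟩ := hlip
    obtain ⟨F, hFext, hFnorm, lam', M', hlam', hM', hF⟩ :=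
      ha A f hnorm ⟨lam, 0, hlam, le_refl 0, fun x y => by simpa using hf x y⟩
    refine ⟨fun x => F x, ?_, fun x => hFnorm x, ?_⟩
    · intro x hA h₁
      exact hFext ⟨x, hA⟩
    · exact asymp_to_lip hδ hdd hlam' hM' (fun x y => hF x y)
  · -- (b) → (a)
    intro hb A f hnorm hlip
    obtain ⟨lam, M, hlam, hM, hf⟩ := hlip
    choose p hp1 hp2 using hnet
    set e : EuclideanSpace ℝ (Fin (m + 1)) := EuclideanSpace.single (0 : Fin (m + 1)) (1 : ℝ) with he_def
    have he : ‖e‖ = 1 := by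
      rw [he_def, EuclideanSpace.norm_single, norm_one]
    -- the pushed-forward set inside X₁
    set A₁ : Set X := {x | ∃ a : A, p (a : X) = x} with hA₁_def
    have hA₁sub : A₁ ⊆ X₁ := by
      rintro x ⟨a, rfl⟩
      exact hp1 _
    have hsel : ∀ b : A₁, ∃ a : A, p (a : X) = (b : X) := fun b => b.2
    choose sel hselp using hsel
    -- the pushed-forward function
    set f₁ : A₁ → EuclideanSpace ℝ (Fin (m + 1)) := fun b => resc e (dist (b : X) x₀) (f (sel b)) with hf₁_def
    have hnorm₁ : ∀ b : A₁, ‖f₁ b‖ = dist (b : X) x₀ := fun b =>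
      norm_resc he dist_nonneg _
    have hdsel : ∀ b : A₁, dist (b : X) ((sel b : A) : X) ≤ ε := by
      intro b
      rw [dist_comm, ← hselp b]
      exact (hp2 _).le
    have key₁ : ∀ b : A₁, ‖f₁ b - f (sel b)‖ ≤ ε := by
      intro b
      rw [hf₁_def]
      rw [norm_resc_sub he dist_nonneg, hnorm (sel b)]
      calc |dist (b : X) x₀ - dist ((sel b : A) : X) x₀| ≤ dist (b : X) ((sel b : A) : X) :=
            abs_dist_sub_le _ _ _
        _ ≤ ε := hdsel b
    have hasymp₁ : ∀ b b' : A₁,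
        dist (f₁ b) (f₁ b') ≤ lam * dist (b : X) (b' : X) + (M + 2 * ε + 2 * lam * ε) := by
      intro b b'
      have t1 : dist (f₁ b) (f₁ b') ≤
          dist (f₁ b) (f (sel b)) + dist (f (sel b)) (f (sel b')) + dist (f (sel b')) (f₁ b') :=
        dist_triangle4 _ _ _ _
      have e1 : dist (f₁ b) (f (sel b)) ≤ ε := by
        rw [dist_eq_norm]; exact key₁ b
      have e2 : dist (f (sel b')) (f₁ b') ≤ ε := by
        rw [dist_comm, dist_eq_norm]; exact key₁ b'
      have dd : dist ((sel b : A) : X) ((sel b' : A) : X) ≤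
          ε + dist (b : X) (b' : X) + ε := by
        calc dist ((sel b : A) : X) ((sel b' : A) : X) ≤
            dist ((sel b : A) : X) (b : X) + dist (b : X) (b' : X) +
              dist (b' : X) ((sel b' : A) : X) := dist_triangle4 _ _ _ _
          _ ≤ ε + dist (b : X) (b' : X) + ε := by
              have := hdsel b
              have := hdsel b'
              rw [dist_comm ((sel b : A) : X) (b : X)]
              linarith
      have e3 : dist (f (sel b)) (f (sel b')) ≤
          lam * (ε + dist (b : X) (b' : X) + ε) + M := by
        calc dist (f (sel b)) (f (sel b')) ≤
            lam * dist (sel b) (sel b') + M := hf _ _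
          _ = lam * dist ((sel b : A) : X) ((sel b' : A) : X) + M := by
              rw [Subtype.dist_eq]
          _ ≤ lam * (ε + dist (b : X) (b' : X) + ε) + M := by
              have := mul_le_mul_of_nonneg_left dd hlam
              linarith
      nlinarith [t1, e1, e2, e3]
    obtain ⟨lam₁', hlam₁', hlip₁⟩ :=
      asymp_to_lip hδ (fun x hx y hy => hdd x (hA₁sub hx) y (hA₁sub hy))
        hlam (by positivity) hasymp₁
    obtain ⟨F₁, hF₁ext, hF₁norm, lam₁, hlam₁, hF₁⟩ :=
      hb A₁ hA₁sub f₁ hnorm₁ ⟨lam₁', hlam₁', hlip₁⟩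
    classical
    set F : X → EuclideanSpace ℝ (Fin (m + 1)) := fun x =>
      if hx : x ∈ A then f ⟨x, hx⟩ else resc e (dist x x₀) (F₁ ⟨p x, hp1 x⟩) with hF_def
    set C : ℝ := lam * (2 * ε) + M + 2 * ε with hC_def
    have hC0 : 0 ≤ C := by positivity
    have key : ∀ x : X, ‖F x - F₁ ⟨p x, hp1 x⟩‖ ≤ C := by
      intro x
      by_cases hx : x ∈ A
      · have hmem : p x ∈ A₁ := ⟨⟨x, hx⟩, rfl⟩
        have hFx : F x = f ⟨x, hx⟩ := dif_pos hx
        rw [hFx, hF₁ext (p x) hmem (hp1 x)]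
        set b : A₁ := ⟨p x, hmem⟩ with hb_def
        have d1 : dist ((⟨x, hx⟩ : A) : X) ((sel b : A) : X) ≤ 2 * ε := by
          calc dist x ((sel b : A) : X) ≤ dist x (p x) + dist (p x) ((sel b : A) : X) :=
              dist_triangle _ _ _
            _ ≤ ε + ε := by
                have h2 : dist (p x) ((sel b : A) : X) ≤ ε := by
                  have := hdsel b
                  simpa [hb_def] using this
                exact add_le_add (hp2 x).le h2
            _ = 2 * ε := by ring
        calc ‖f ⟨x, hx⟩ - f₁ b‖ ≤ ‖f ⟨x, hx⟩ - f (sel b)‖ + ‖f (sel b) - f₁ b‖ := by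
              have := norm_sub_le_norm_sub_add_norm_sub (f ⟨x, hx⟩) (f (sel b)) (f₁ b)
              exact this
          _ ≤ (lam * (2 * ε) + M) + ε := by
              have h1 : ‖f ⟨x, hx⟩ - f (sel b)‖ ≤ lam * (2 * ε) + M := by
                rw [← dist_eq_norm]
                calc dist (f ⟨x, hx⟩) (f (sel b)) ≤ lam * dist (⟨x, hx⟩ : A) (sel b) + M :=
                    hf _ _
                  _ = lam * dist ((⟨x, hx⟩ : A) : X) ((sel b : A) : X) + M := by
                      rw [Subtype.dist_eq]
                  _ ≤ lam * (2 * ε) + M := by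
                      have := mul_le_mul_of_nonneg_left d1 hlam
                      linarith
              have h2 : ‖f (sel b) - f₁ b‖ ≤ ε := by
                rw [norm_sub_rev]; exact key₁ b
              linarith
          _ ≤ C := by rw [hC_def]; linarith
      · have hFx : F x = resc e (dist x x₀) (F₁ ⟨p x, hp1 x⟩) := dif_neg hx
        rw [hFx, norm_resc_sub he dist_nonneg, hF₁norm ⟨p x, hp1 x⟩]
        calc |dist x x₀ - dist (p x) x₀| ≤ dist x (p x) := abs_dist_sub_le _ _ _
          _ ≤ ε := (hp2 x).le
          _ ≤ C := by rw [hC_def]; nlinarith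
    refine ⟨F, ?_, ?_, lam₁, 2 * C + lam₁ * (2 * ε), hlam₁, by positivity, ?_⟩
    · intro a
      exact dif_pos a.2
    · intro x
      by_cases hx : x ∈ A
      · rw [show F x = f ⟨x, hx⟩ from dif_pos hx, hnorm ⟨x, hx⟩]
      · rw [show F x = resc e (dist x x₀) (F₁ ⟨p x, hp1 x⟩) from dif_neg hx]
        exact norm_resc he dist_nonneg _
    · intro x y
      have t1 : dist (F x) (F y) ≤
          dist (F x) (F₁ ⟨p x, hp1 x⟩) + dist (F₁ ⟨p x, hp1 x⟩) (F₁ ⟨p y, hp1 y⟩) +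
            dist (F₁ ⟨p y, hp1 y⟩) (F y) := dist_triangle4 _ _ _ _
      have e1 : dist (F x) (F₁ ⟨p x, hp1 x⟩) ≤ C := by
        rw [dist_eq_norm]; exact key x
      have e2 : dist (F₁ ⟨p y, hp1 y⟩) (F y) ≤ C := by
        rw [dist_comm, dist_eq_norm]; exact key y
      have dp : dist (p x) (p y) ≤ ε + dist x y + ε := by
        calc dist (p x) (p y) ≤ dist (p x) x + dist x y + dist y (p y) :=
            dist_triangle4 _ _ _ _
          _ ≤ ε + dist x y + ε := by
              have h1 := (hp2 x).le
              have h2 := (hp2 y).le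
              rw [dist_comm (p x) x]
              linarith
      have e3 : dist (F₁ ⟨p x, hp1 x⟩) (F₁ ⟨p y, hp1 y⟩) ≤ lam₁ * (ε + dist x y + ε) := by
        calc dist (F₁ ⟨p x, hp1 x⟩) (F₁ ⟨p y, hp1 y⟩) ≤
            lam₁ * dist (⟨p x, hp1 x⟩ : X₁) (⟨p y, hp1 y⟩ : X₁) := hF₁ _ _
          _ = lam₁ * dist (p x) (p y) := by rw [Subtype.dist_eq]
          _ ≤ lam₁ * (ε + dist x y + ε) := mul_le_mul_of_nonneg_left dp hlam₁
      nlinarith [t1, e1, e2, e3]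
end

section
/- Let (X,d) be a pointed discrete metric space, let r > 0 and M > 1, and set X_k = An(X, r·M^{k−1}, r·M^{k+1}) and Y_k = An(X, r·M^{k−1}, ∞) for k ≥ 1. For a function f : X → S^m (m ≥ 0) the following are equivalent: (a) the induced norm-preserving function f' : X → ℝ^{m+1}, f'(x) = |x|·f(x), is Lipschitz; (b) the sequence (M^k · Lip(f|_{Y_k}))_{k≥1} is bounded; (c) the sequence (M^k · Lip(f|_{X_k}))_{k≥1} is bounded. -/
/-- The annulus `An(X, r, s) = {x ∈ X : r ≤ |x| < s}` in a pointed metric space. -/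
def Annulus {X : Type*} [MetricSpace X] (x₀ : X) (r s : ℝ) : Set X :=
  {x | r ≤ dist x x₀ ∧ dist x x₀ < s}

/-- The infinite annulus `An(X, r, ∞) = {x ∈ X : r ≤ |x|}` in a pointed metric space. -/
def AnnulusInf {X : Type*} [MetricSpace X] (x₀ : X) (r : ℝ) : Set X :=
  {x | r ≤ dist x x₀}

lemma dist_le_two_of_norm_eq_one {E : Type*} [SeminormedAddCommGroup E] {u v : E} (hu : ‖u‖ = 1)
    (hv : ‖v‖ = 1) : dist u v ≤ 2 := by
  linarith [dist_le_norm_add_norm u v]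

section NormedSpace

variable {E : Type*} [NormedAddCommGroup E] [NormedSpace ℝ E] {a b : ℝ} {u v : E}

lemma norm_smul_sub_smul_le (ha : 0 ≤ a) (hv : ‖v‖ = 1) :
    ‖a • u - b • v‖ ≤ a * ‖u - v‖ + |a - b| :=
  calc ‖a • u - b • v‖ = ‖a • (u - v) + (a - b) • v‖ := by
        rw [smul_sub, sub_smul]; abel_nf
    _ ≤ ‖a • (u - v)‖ + ‖(a - b) • v‖ := norm_add_le _ _
    _ = a * ‖u - v‖ + |a - b| := by
        rw [norm_smul, norm_smul, hv, Real.norm_eq_abs, Real.norm_eq_abs, abs_of_nonneg ha,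
          mul_one]

lemma mul_norm_sub_le_norm_smul_sub_smul (ha : 0 ≤ a) (hv : ‖v‖ = 1) :
    a * ‖u - v‖ ≤ ‖a • u - b • v‖ + |a - b| :=
  calc a * ‖u - v‖ = ‖(a • u - b • v) - (a - b) • v‖ := by
        rw [sub_smul, sub_sub_sub_cancel_right, ← smul_sub, norm_smul, Real.norm_eq_abs,
          abs_of_nonneg ha]
    _ ≤ ‖a • u - b • v‖ + ‖(a - b) • v‖ := norm_sub_le _ _
    _ = ‖a • u - b • v‖ + |a - b| := by rw [norm_smul, hv, Real.norm_eq_abs, mul_one]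

end NormedSpace

section Pointed

variable {X : Type*} [MetricSpace X] (x₀ : X)

section General

variable {Y : Type*} [MetricSpace Y]

/-- `ScaledLipBounded M f S` says that the sequence `M ^ k * Lip (f|_{S k})`, `k ≥ 1`, is bounded. -/
def ScaledLipBounded (M : ℝ) (f : X → Y) (S : ℕ → Set X) : Prop :=
  ∃ C : ℝ, ∀ k : ℕ, 1 ≤ k → ∀ x ∈ S k, ∀ y ∈ S k, M ^ k * dist (f x) (f y) ≤ C * dist x y

lemma ScaledLipBounded.mono {M : ℝ} {f : X → Y} {S T : ℕ → Set X} (hST : ∀ k, S k ⊆ T k)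
    (hT : ScaledLipBounded M f T) : ScaledLipBounded M f S := by
  obtain ⟨C, hC⟩ := hT
  exact ⟨C, fun k hk x hx y hy => hC k hk x (hST k hx) y (hST k hy)⟩

variable {f : X → Y} {r M : ℝ}

lemma scaledLipBounded_annulusInf_of_mul_dist_le (hr : 0 < r) (hM : 0 ≤ M) {K : ℝ}
    (hK : ∀ x y, dist x x₀ * dist (f x) (f y) ≤ K * dist x y) :
    ScaledLipBounded M f fun k => AnnulusInf x₀ (r * M ^ (k - 1)) := by
  refine ⟨M / r * K, fun k hk x hx y _ => ?_⟩
  obtain ⟨n, rfl⟩ : ∃ n, k = n + 1 := ⟨k - 1, by omega⟩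
  have hx : r * M ^ n ≤ dist x x₀ := by simpa [AnnulusInf] using hx
  calc M ^ (n + 1) * dist (f x) (f y) = M / r * (r * M ^ n * dist (f x) (f y)) := by
        field_simp; ring
    _ ≤ M / r * (dist x x₀ * dist (f x) (f y)) := by gcongr
    _ ≤ M / r * (K * dist x y) := mul_le_mul_of_nonneg_left (hK x y) (by positivity)
    _ = M / r * K * dist x y := by ring

variable {D : ℝ}

lemma mul_dist_le_of_dist_lt (hD : ∀ x y, dist (f x) (f y) ≤ D) {ε : ℝ} (hε : 0 < ε)
    {x y : X} (hxy : ε ≤ dist x y) (hx : dist x x₀ < r) :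
    dist x x₀ * dist (f x) (f y) ≤ D * r / ε * dist x y := by
  have hD0 : 0 ≤ D := dist_nonneg.trans (hD x y)
  have hr : 0 ≤ r := dist_nonneg.trans hx.le
  calc dist x x₀ * dist (f x) (f y) ≤ r * D := mul_le_mul hx.le (hD x y) dist_nonneg hr
    _ = D * r / ε * ε := by field_simp
    _ ≤ D * r / ε * dist x y := by gcongr

lemma mul_dist_le_of_mul_le (hD : ∀ x y, dist (f x) (f y) ≤ D) (hM : 1 < M) {x y : X}
    (hxy : M * dist x x₀ ≤ dist y x₀) :
    dist x x₀ * dist (f x) (f y) ≤ D / (M - 1) * dist x y := by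
  have hM1 : 0 < M - 1 := by linarith
  have hD0 : 0 ≤ D := dist_nonneg.trans (hD x y)
  have hgap : (M - 1) * dist x x₀ ≤ dist x y := by
    linarith [abs_le.1 (abs_dist_sub_le x y x₀)]
  calc dist x x₀ * dist (f x) (f y) ≤ dist x x₀ * D := by gcongr; exact hD x y
    _ = D / (M - 1) * ((M - 1) * dist x x₀) := by field_simp
    _ ≤ D / (M - 1) * dist x y := by gcongr

lemma mul_dist_le_of_annulus_bound (hD : ∀ x y, dist (f x) (f y) ≤ D)
    (hr : 0 < r) (hM : 1 < M) {C : ℝ}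
    (hC : ∀ k : ℕ, 1 ≤ k → ∀ x ∈ Annulus x₀ (r * M ^ (k - 1)) (r * M ^ (k + 1)),
      ∀ y ∈ Annulus x₀ (r * M ^ (k - 1)) (r * M ^ (k + 1)),
        M ^ k * dist (f x) (f y) ≤ C * dist x y)
    {x y : X} (hrx : r ≤ dist x x₀) (hxy : dist x x₀ ≤ dist y x₀) :
    dist x x₀ * dist (f x) (f y) ≤ max (r * C) (D / (M - 1)) * dist x y := by
  obtain ⟨n, hn, hn'⟩ := exists_nat_pow_near ((one_le_div hr).2 hrx) hM
  rw [le_div_iff₀ hr, mul_comm] at hn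
  rw [div_lt_iff₀ hr, mul_comm] at hn'
  rcases lt_or_ge (dist y x₀) (r * M ^ (n + 2)) with hy | hy
  · have hx' : dist x x₀ < r * M ^ (n + 2) :=
      hn'.trans_le (by gcongr; exacts [hM.le, by omega])
    have hfxy := hC (n + 1) (by omega) x ⟨hn, hx'⟩ y ⟨hn.trans hxy, hy⟩
    calc dist x x₀ * dist (f x) (f y) ≤ r * (M ^ (n + 1) * dist (f x) (f y)) := by
          rw [← mul_assoc]; gcongr
      _ ≤ r * (C * dist x y) := by gcongr
      _ ≤ max (r * C) (D / (M - 1)) * dist x y := by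
          rw [← mul_assoc]; gcongr; exact le_max_left _ _
  · have hMx : M * dist x x₀ ≤ dist y x₀ := by
      calc M * dist x x₀ ≤ M * (r * M ^ (n + 1)) := by gcongr
        _ = r * M ^ (n + 2) := by ring
        _ ≤ dist y x₀ := hy
    exact (mul_dist_le_of_mul_le x₀ hD hM hMx).trans (by gcongr; exact le_max_right _ _)

end General

section UnitValued

variable {E : Type*} [NormedAddCommGroup E] [NormedSpace ℝ E] {f : X → E}

lemma dist_smul_le_mul_dist_add (hf : ∀ x, ‖f x‖ = 1) (x y : X) :
    dist (dist x x₀ • f x) (dist y x₀ • f y) ≤ dist x x₀ * dist (f x) (f y) + dist x y := by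
  rw [dist_eq_norm, dist_eq_norm]
  exact (norm_smul_sub_smul_le dist_nonneg (hf y)).trans (by gcongr; exact abs_dist_sub_le x y x₀)

lemma mul_dist_le_dist_smul_add (hf : ∀ x, ‖f x‖ = 1) (x y : X) :
    dist x x₀ * dist (f x) (f y) ≤ dist (dist x x₀ • f x) (dist y x₀ • f y) + dist x y := by
  rw [dist_eq_norm, dist_eq_norm]
  exact (mul_norm_sub_le_norm_smul_sub_smul dist_nonneg (hf y)).trans
    (by gcongr; exact abs_dist_sub_le x y x₀)

lemma LipFun.exists_mul_dist_le (hf : ∀ x, ‖f x‖ = 1)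
    (hF : LipFun fun x : X => dist x x₀ • f x) :
    ∃ K : ℝ, ∀ x y, dist x x₀ * dist (f x) (f y) ≤ K * dist x y := by
  obtain ⟨lam, -, hlam⟩ := hF
  refine ⟨lam + 1, fun x y => ?_⟩
  linarith [mul_dist_le_dist_smul_add x₀ hf x y, hlam x y]

lemma lipFun_of_mul_dist_le (hf : ∀ x, ‖f x‖ = 1) {K : ℝ}
    (hK : ∀ x y, x ≠ y → dist x x₀ ≤ dist y x₀ → dist x x₀ * dist (f x) (f y) ≤ K * dist x y) :
    LipFun fun x : X => dist x x₀ • f x := by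
  refine ⟨max K 0 + 1, by positivity, fun x y => ?_⟩
  wlog hxy : dist x x₀ ≤ dist y x₀ generalizing x y
  · rw [dist_comm, dist_comm x]
    exact this y x (le_of_not_ge hxy)
  rcases eq_or_ne x y with rfl | hne
  · simp
  calc dist (dist x x₀ • f x) (dist y x₀ • f y)
      ≤ dist x x₀ * dist (f x) (f y) + dist x y := dist_smul_le_mul_dist_add x₀ hf x y
    _ ≤ K * dist x y + dist x y := by linarith [hK x y hne hxy]
    _ ≤ (max K 0 + 1) * dist x y := by nlinarith [le_max_left K 0, dist_nonneg (x := x) (y := y)]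


lemma LipFun.scaledLipBounded_annulusInf (hf : ∀ x, ‖f x‖ = 1)
    (hF : LipFun fun x : X => dist x x₀ • f x) {r M : ℝ} (hr : 0 < r) (hM : 0 ≤ M) :
    ScaledLipBounded M f fun k => AnnulusInf x₀ (r * M ^ (k - 1)) :=
  let ⟨_, hK⟩ := hF.exists_mul_dist_le x₀ hf
  scaledLipBounded_annulusInf_of_mul_dist_le x₀ hr hM hK

lemma lipFun_of_scaledLipBounded_annulus (hdisc : ∃ ε > 0, ∀ x y : X, x ≠ y → ε ≤ dist x y)
    {r M : ℝ} (hr : 0 < r) (hM : 1 < M) (hf : ∀ x, ‖f x‖ = 1)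
    (hC : ScaledLipBounded M f fun k => Annulus x₀ (r * M ^ (k - 1)) (r * M ^ (k + 1))) :
    LipFun fun x : X => dist x x₀ • f x := by
  obtain ⟨C, hC⟩ := hC
  obtain ⟨ε, hε, hdist⟩ := hdisc
  have hD (x y : X) : dist (f x) (f y) ≤ 2 := dist_le_two_of_norm_eq_one (hf x) (hf y)
  refine lipFun_of_mul_dist_le x₀ hf (K := max (2 * r / ε) (max (r * C) (2 / (M - 1))))
    fun x y hne hxy => ?_
  rcases lt_or_ge (dist x x₀) r with hx | hx
  · exact (mul_dist_le_of_dist_lt x₀ hD hε (hdist x y hne) hx).trans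
      (mul_le_mul_of_nonneg_right (le_max_left _ _) dist_nonneg)
  · exact (mul_dist_le_of_annulus_bound x₀ hD hr hM hC hx hxy).trans
      (mul_le_mul_of_nonneg_right (le_max_right _ _) dist_nonneg)

end UnitValued

end Pointed

/-- for a function `f : X → Sᵐ` on a pointed discrete metric space, the induced
norm-preserving map `f'(x) = |x|·f(x)` is Lipschitz iff the sequence `Mᵏ·Lip(f|_{Y_k})` is
bounded, iff the sequence `Mᵏ·Lip(f|_{X_k})` is bounded, where
`X_k = An(X, r·M^{k-1}, r·M^{k+1})` and `Y_k = An(X, r·M^{k-1}, ∞)`. -/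
theorem stmt_1 {X : Type*} [MetricSpace X] (x₀ : X)
    (hdisc : ∃ ε > 0, ∀ x y : X, x ≠ y → ε ≤ dist x y)
    (r M : ℝ) (hr : 0 < r) (hM : 1 < M) (m : ℕ)
    (f : X → EuclideanSpace ℝ (Fin (m + 1))) (hf : ∀ x, ‖f x‖ = 1) :
    (LipFun (fun x : X => dist x x₀ • f x)
      ↔ ∃ C : ℝ, ∀ k : ℕ, 1 ≤ k →
          ∀ x ∈ AnnulusInf x₀ (r * M ^ (k - 1)), ∀ y ∈ AnnulusInf x₀ (r * M ^ (k - 1)),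
            M ^ k * dist (f x) (f y) ≤ C * dist x y) ∧
    (LipFun (fun x : X => dist x x₀ • f x)
      ↔ ∃ C : ℝ, ∀ k : ℕ, 1 ≤ k →
          ∀ x ∈ Annulus x₀ (r * M ^ (k - 1)) (r * M ^ (k + 1)),
            ∀ y ∈ Annulus x₀ (r * M ^ (k - 1)) (r * M ^ (k + 1)),
              M ^ k * dist (f x) (f y) ≤ C * dist x y) := by
  have hab (hF : LipFun fun x : X => dist x x₀ • f x) :=
    hF.scaledLipBounded_annulusInf x₀ hf hr (zero_le_one.trans hM.le)
  have hbc : ScaledLipBounded M f (fun k => AnnulusInf x₀ (r * M ^ (k - 1))) →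
      ScaledLipBounded M f fun k => Annulus x₀ (r * M ^ (k - 1)) (r * M ^ (k + 1)) :=
    ScaledLipBounded.mono fun _ _ hx => hx.1
  have hca := lipFun_of_scaledLipBounded_annulus x₀ hdisc hr hM hf
  exact ⟨⟨hab, hca ∘ hbc⟩, ⟨hbc ∘ hab, hca⟩⟩
end

section
/- Let (X,d) be a pointed discrete metric space and m ≥ 0. The following are equivalent: (a) every Lipschitz norm-preserving function f' : A → ℝ^{m+1}, A ⊂ X, extends to a Lipschitz norm-preserving function F' : X → ℝ^{m+1}; (b) for all r,s > 0, all M > 1, and every sequence of functions f_k : A_k → S^m with A_k ⊂ An(X, r·M^{2k}, r·M^{2k+1}) and Lip(f_k) ≤ s/M^{2k} for all k ≥ 1, there exist c > 0 and functions g_k : An(X, r·M^{2k}, r·M^{2k+1}) → S^m with Lip(g_k) ≤ c/M^{2k} and g_k|_{A_k} = f_k for all k ≥ 1; (c) for all r,s > 0, all M > 1, and every sequence of functions f_k : A_k → S^m with A_k ⊂ An(X, r·M^{k}, r·M^{k+1}) and Lip(f_k) ≤ s/M^{k} for all k ≥ 1, there exist c > 0 and functions g_k : An(X, r·M^{k},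 r·M^{k+1}) → S^m with Lip(g_k) ≤ c/M^{k} and g_k|_{A_k} = f_k for all k ≥ 1. -/
open Metric Set

section Extension

variable {X : Type*} [MetricSpace X] {x₀ x y : X} {Y : Type*} [MetricSpace Y]

def NormPreservingExtension (x₀ : X) (E : Type*) [NormedAddCommGroup E] : Prop :=
  ∀ (A : Set X) (f : A → E), (∀ a : A, ‖f a‖ = dist (a : X) x₀) → LipFun f →
    ∃ F : X → E, (∀ a : A, F a = f a) ∧ (∀ x, ‖F x‖ = dist x x₀) ∧ LipFun F

/-- Condition (b) of the theorem is `a k = 2 * k`, condition (c) is `a k = k`. -/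
def AnnularExtension (x₀ : X) (E : Type*) [NormedAddCommGroup E] (a : ℕ → ℕ) : Prop :=
  ∀ (r s M : ℝ), 0 < r → 0 < s → 1 < M →
    ∀ (A : ℕ → Set X),
      (∀ k : ℕ, 1 ≤ k → A k ⊆ Annulus x₀ (r * M ^ a k) (r * M ^ (a k + 1))) →
      ∀ f : (k : ℕ) → (A k) → sphere (0 : E) 1,
        (∀ k : ℕ, 1 ≤ k → ∀ x y : A k,
          dist (f k x) (f k y) ≤ s / M ^ a k * dist (x : X) (y : X)) →
      ∃ c > (0 : ℝ), ∃ g : (k : ℕ) → (Annulus x₀ (r * M ^ a k) (r * M ^ (a k + 1))) →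
          sphere (0 : E) 1,
        ∀ k : ℕ, 1 ≤ k →
          (∀ x y : (Annulus x₀ (r * M ^ a k) (r * M ^ (a k + 1))),
            dist (g k x) (g k y) ≤ c / M ^ a k * dist (x : X) (y : X)) ∧
          (∀ (x : X) (hA : x ∈ A k) (hAn : x ∈ Annulus x₀ (r * M ^ a k) (r * M ^ (a k + 1))),
            g k ⟨x, hAn⟩ = f k ⟨x, hA⟩)

def ScaleLipschitzOn (x₀ : X) (C : ℝ) (f : X → Y) (s : Set X) : Prop :=
  ∀ x ∈ s, ∀ y ∈ s, dist (f x) (f y) * dist y x₀ ≤ C * dist x y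

theorem ScaleLipschitzOn.mono {C : ℝ} {f : X → Y} {s t : Set X}
    (hf : ScaleLipschitzOn x₀ C f t) (hst : s ⊆ t) : ScaleLipschitzOn x₀ C f s :=
  fun x hx y hy => hf x (hst hx) y (hst hy)

theorem ScaleLipschitzOn.weaken {C D : ℝ} {f : X → Y} {s : Set X}
    (hf : ScaleLipschitzOn x₀ C f s) (hCD : C ≤ D) : ScaleLipschitzOn x₀ D f s :=
  fun x hx y hy => (hf x hx y hy).trans (mul_le_mul_of_nonneg_right hCD dist_nonneg)

theorem ScaleLipschitzOn.dist_le_div_pow {C r M : ℝ} {n : ℕ} {f : X → Y} {s : Set X}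
    (hf : ScaleLipschitzOn x₀ C f s) (hr : 0 < r) (hM : 0 < M) (hx : x ∈ s) (hy : y ∈ s)
    (hy' : r * M ^ n ≤ dist y x₀) : dist (f x) (f y) ≤ C / r / M ^ n * dist x y := by
  rw [div_div, div_mul_eq_mul_div, le_div_iff₀ (by positivity)]
  exact (mul_le_mul_of_nonneg_left hy' dist_nonneg).trans (hf x hx y hy)

theorem scaleLipschitzOn_of_dist_le {c r M : ℝ} {n : ℕ} {f : X → Y} {s : Set X} (hc : 0 ≤ c)
    (hM : 0 < M) (hs : s ⊆ Annulus x₀ (r * M ^ n) (r * M ^ (n + 1)))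
    (hf : ∀ x ∈ s, ∀ y ∈ s, dist (f x) (f y) ≤ c / M ^ n * dist x y) :
    ScaleLipschitzOn x₀ (c * r * M) f s := fun x hx y hy =>
  calc dist (f x) (f y) * dist y x₀ ≤ c / M ^ n * dist x y * (r * M ^ (n + 1)) :=
        mul_le_mul (hf x hx y hy) (hs hy).2.le dist_nonneg (by positivity)
    _ = c * r * M * dist x y := by field_simp; ring

noncomputable def scale (x₀ x : X) : ℤ := Int.log 2 (dist x x₀)

theorem scale_self (x₀ : X) : scale x₀ x₀ = 0 := by simp [scale]

theorem two_zpow_scale_le (hx : x ≠ x₀) : (2 : ℝ) ^ scale x₀ x ≤ dist x x₀ :=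
  Int.zpow_log_le_self one_lt_two (dist_pos.mpr hx)

theorem dist_lt_two_zpow_scale_add_one (x₀ x : X) : dist x x₀ < (2 : ℝ) ^ (scale x₀ x + 1) :=
  Int.lt_zpow_succ_log_self one_lt_two _

theorem dist_le_half_of_scale_add_two_le (hy : y ≠ x₀) (h : scale x₀ x + 2 ≤ scale x₀ y) :
    dist x x₀ ≤ dist y x₀ / 2 := by
  have hx := dist_lt_two_zpow_scale_add_one x₀ x
  have hy := two_zpow_scale_le hy
  have : (2 : ℝ) ^ (scale x₀ x + 1) ≤ 2 ^ scale x₀ y / 2 := by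
    rw [div_eq_mul_inv, ← zpow_sub_one₀ two_ne_zero]
    exact zpow_le_zpow_right₀ one_le_two (by omega)
  linarith

theorem mem_annulus_two_zpow_iff {a b : ℤ} :
    x ∈ Annulus x₀ (2 ^ a) (2 ^ b) ↔ x ≠ x₀ ∧ a ≤ scale x₀ x ∧ scale x₀ x < b := by
  by_cases hx : x = x₀
  · simp [Annulus, hx, not_le.mpr (zpow_pos (two_pos : (0 : ℝ) < 2) a)]
  have hpos := dist_pos.mpr hx
  simp only [Annulus, mem_ofPred_eq, ne_eq, hx, not_false_eq_true, true_and, scale]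
  rw [← Nat.cast_ofNat, Int.zpow_le_iff_le_log one_lt_two hpos,
    Int.lt_zpow_iff_log_lt one_lt_two hpos]

theorem mem_annulus_two_pow_iff (j k : ℕ) :
    x ∈ Annulus x₀ (2 ^ j * (2 ^ 8) ^ k) (2 ^ j * (2 ^ 8) ^ (k + 1)) ↔
      x ≠ x₀ ∧ (scale x₀ x - j) / 8 = k := by
  have h : ∀ i : ℕ, (2 : ℝ) ^ j * (2 ^ 8) ^ i = 2 ^ ((j : ℤ) + 8 * i) := fun i => by
    rw [← pow_mul, ← pow_add, ← zpow_natCast]; push_cast; rfl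
  rw [h, h, mem_annulus_two_zpow_iff]
  refine and_congr_right fun _ => ?_
  push_cast
  omega

theorem annulus_div_mul_pow_succ (r M : ℝ) (hM : M ≠ 0) (n : ℕ) :
    Annulus x₀ (r / M * M ^ (n + 1)) (r / M * M ^ (n + 1 + 1)) =
      Annulus x₀ (r * M ^ n) (r * M ^ (n + 1)) := by
  have h : ∀ m : ℕ, r / M * M ^ (m + 1) = r * M ^ m := fun m => by
    rw [pow_succ]; field_simp
  rw [h, h]

theorem mul_dist_le_of_mem_annulus {r M : ℝ} (hr : 0 < r) (hM : 1 ≤ M) {i j : ℕ}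
    (hij : i + 2 ≤ j) (hx : x ∈ Annulus x₀ (r * M ^ i) (r * M ^ (i + 1)))
    (hy : y ∈ Annulus x₀ (r * M ^ j) (r * M ^ (j + 1))) : M * dist x x₀ ≤ dist y x₀ :=
  calc M * dist x x₀ ≤ M * (r * M ^ (i + 1)) :=
        mul_le_mul_of_nonneg_left hx.2.le (by linarith)
    _ = r * M ^ (i + 2) := by ring
    _ ≤ r * M ^ j := by gcongr
    _ ≤ dist y x₀ := hy.1

variable {E : Type*} [NormedAddCommGroup E]

theorem dist_sphere_le_two (p q : sphere (0 : E) 1) : dist p q ≤ 2 := by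
  rw [Subtype.dist_eq, dist_eq_norm]
  calc ‖(p : E) - q‖ ≤ ‖(p : E)‖ + ‖(q : E)‖ := norm_sub_le _ _
    _ = 2 := by rw [norm_eq_of_mem_sphere, norm_eq_of_mem_sphere]; norm_num

theorem dist_mul_le_of_far (p q : sphere (0 : E) 1) {t : ℝ} (ht0 : 0 ≤ t) (ht1 : t < 1)
    (h : dist x x₀ ≤ t * dist y x₀ ∨ dist y x₀ ≤ t * dist x x₀) :
    dist p q * dist y x₀ ≤ 2 / (1 - t) * dist x y := by
  have hgap : (1 - t) * dist y x₀ ≤ dist x y := by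
    have := abs_le.mp (abs_dist_sub_le x y x₀)
    rcases h with h | h <;> nlinarith [dist_nonneg (x := x) (y := x₀)]
  rw [div_mul_eq_mul_div, le_div_iff₀ (by linarith), mul_assoc, mul_comm (dist y x₀)]
  calc dist p q * ((1 - t) * dist y x₀) ≤ 2 * ((1 - t) * dist y x₀) :=
        mul_le_mul_of_nonneg_right (dist_sphere_le_two p q)
          (by nlinarith [dist_nonneg (x := y) (y := x₀)])
    _ ≤ 2 * dist x y := by linarith

theorem scaleLipschitzOn_of_close {f : X → sphere (0 : E) 1} {s : Set X} {C : ℝ}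
    (h : ∀ x ∈ s, ∀ y ∈ s, x ≠ x₀ → y ≠ x₀ → scale x₀ x ≤ scale x₀ y + 1 →
      scale x₀ y ≤ scale x₀ x + 1 → dist (f x) (f y) * dist y x₀ ≤ C * dist x y) :
    ScaleLipschitzOn x₀ (max C 4) f s := by
  intro x hx y hy
  have far : dist x x₀ ≤ 1 / 2 * dist y x₀ ∨ dist y x₀ ≤ 1 / 2 * dist x x₀ →
      dist (f x) (f y) * dist y x₀ ≤ max C 4 * dist x y := fun hfar =>
    (dist_mul_le_of_far _ _ (by norm_num) (by norm_num) hfar).trans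
      (mul_le_mul_of_nonneg_right (by norm_num) dist_nonneg)
  by_cases hy0 : y = x₀
  · simp [hy0, mul_nonneg (le_max_of_le_right zero_le_four) dist_nonneg]
  by_cases hx0 : x = x₀
  · exact far (Or.inl (by simp [hx0]))
  by_cases hxy : scale x₀ x + 2 ≤ scale x₀ y
  · exact far (Or.inl (by linarith [dist_le_half_of_scale_add_two_le hy0 hxy]))
  by_cases hyx : scale x₀ y + 2 ≤ scale x₀ x
  · exact far (Or.inr (by linarith [dist_le_half_of_scale_add_two_le hx0 hyx]))
  exact (h x hx y hy hx0 hy0 (by omega) (by omega)).trans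
    (mul_le_mul_of_nonneg_right (le_max_left _ _) dist_nonneg)

theorem scaleLipschitzOn_univ_of_close {v : X → sphere (0 : E) 1} {ε C : ℝ} {n₀ : ℤ}
    (hε : 0 < ε) (hsep : ∀ x y : X, x ≠ y → ε ≤ dist x y)
    (hv : ∀ x y, x ≠ x₀ → y ≠ x₀ → n₀ ≤ scale x₀ y → scale x₀ x ≤ scale x₀ y + 1 →
      scale x₀ y ≤ scale x₀ x + 1 → dist (v x) (v y) * dist y x₀ ≤ C * dist x y) :
    ScaleLipschitzOn x₀ (max (max C (2 * 2 ^ n₀ / ε)) 4) v univ := by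
  refine scaleLipschitzOn_of_close fun x _ y _ hx0 hy0 hxy hyx => ?_
  by_cases hy : n₀ ≤ scale x₀ y
  · exact (hv x y hx0 hy0 hy hxy hyx).trans
      (mul_le_mul_of_nonneg_right (le_max_left _ _) dist_nonneg)
  rcases eq_or_ne x y with rfl | hne
  · simp
  have hy' : dist y x₀ ≤ 2 ^ n₀ := (dist_lt_two_zpow_scale_add_one x₀ y).le.trans
    (zpow_le_zpow_right₀ one_le_two (by omega))
  calc dist (v x) (v y) * dist y x₀ ≤ 2 * 2 ^ n₀ :=
        mul_le_mul (dist_sphere_le_two _ _) hy' dist_nonneg zero_le_two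
    _ = 2 * 2 ^ n₀ / ε * ε := by field_simp
    _ ≤ max C (2 * 2 ^ n₀ / ε) * dist x y :=
        mul_le_mul (le_max_right _ _) (hsep x y hne) hε.le (by positivity)

theorem exists_scaleLipschitzOn_iUnion {a : ℕ → ℕ} (ha : ∀ j k, j < k → a j + 2 ≤ a k)
    {r s M : ℝ} (hr : 0 < r) (hs : 0 ≤ s) (hM : 1 < M) (A : ℕ → Set X)
    (hA : ∀ k, 1 ≤ k → A k ⊆ Annulus x₀ (r * M ^ a k) (r * M ^ (a k + 1)))
    (f : ℕ → X → sphere (0 : E) 1)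
    (hf : ∀ k, 1 ≤ k → ∀ x ∈ A k, ∀ y ∈ A k, dist (f k x) (f k y) ≤ s / M ^ a k * dist x y) :
    ∃ φ : X → sphere (0 : E) 1, (∀ k, 1 ≤ k → EqOn φ (f k) (A k)) ∧
      ScaleLipschitzOn x₀ (max (s * r * M) (2 / (1 - M⁻¹))) φ {x | ∃ k, 1 ≤ k ∧ x ∈ A k} := by
  classical
  have hM0 : 0 < M := one_pos.trans hM
  have hsep : ∀ j k, 1 ≤ j → j < k → ∀ x ∈ A j, ∀ y ∈ A k, dist x x₀ ≤ M⁻¹ * dist y x₀ :=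
    fun j k hj hjk x hx y hy => by
      rw [inv_mul_eq_div, le_div_iff₀ hM0, mul_comm]
      exact mul_dist_le_of_mem_annulus hr hM.le (ha j k hjk) (hA j hj hx) (hA k (by omega) hy)
  have huniq : ∀ j k x, 1 ≤ j → 1 ≤ k → x ∈ A j → x ∈ A k → j = k := by
    intro j k x hj hk hxj hxk
    have hx0 : 0 < dist x x₀ := (by positivity : 0 < r * M ^ a j).trans_le (hA j hj hxj).1
    have hM' : M⁻¹ * dist x x₀ < dist x x₀ := by nlinarith [inv_lt_one_of_one_lt₀ hM]
    by_contra hne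
    rcases lt_or_gt_of_ne hne with hjk | hkj
    · linarith [hsep j k hj hjk x hxj x hxk]
    · linarith [hsep k j hk hkj x hxk x hxj]
  set idx : X → ℕ := fun x => if hx : ∃ k, 1 ≤ k ∧ x ∈ A k then hx.choose else 0
  have hidx : ∀ k, 1 ≤ k → ∀ x ∈ A k, idx x = k := fun k hk x hx => by
    have hex : ∃ k, 1 ≤ k ∧ x ∈ A k := ⟨k, hk, hx⟩
    simp only [idx, dif_pos hex]
    exact huniq _ _ x hex.choose_spec.1 hk hex.choose_spec.2 hx
  refine ⟨fun x => f (idx x) x, fun k hk x hx => by simp only [hidx k hk x hx], ?_⟩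
  rintro x ⟨j, hj, hxj⟩ y ⟨k, hk, hyk⟩
  simp only [hidx j hj x hxj, hidx k hk y hyk]
  have far : dist x x₀ ≤ M⁻¹ * dist y x₀ ∨ dist y x₀ ≤ M⁻¹ * dist x x₀ →
      dist (f j x) (f k y) * dist y x₀ ≤ max (s * r * M) (2 / (1 - M⁻¹)) * dist x y :=
    fun hfar => (dist_mul_le_of_far _ _ (inv_nonneg.mpr hM0.le) (inv_lt_one_of_one_lt₀ hM)
      hfar).trans (mul_le_mul_of_nonneg_right (le_max_right _ _) dist_nonneg)
  rcases lt_trichotomy j k with hjk | rfl | hkj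
  · exact far (Or.inl (hsep j k hj hjk x hxj y hyk))
  · exact (scaleLipschitzOn_of_dist_le (by positivity) hM0 (hA j hj) (hf j hj) x hxj y hyk).trans
      (mul_le_mul_of_nonneg_right (le_max_left _ _) dist_nonneg)
  · exact far (Or.inr (hsep k j hk hkj y hyk x hxj))

variable [NormedSpace ℝ E]

instance [Nontrivial E] : Nonempty (sphere (0 : E) 1) :=
  (NormedSpace.sphere_nonempty.mpr zero_le_one).to_subtype

theorem ScaleLipschitzOn.dist_smul_le {v : X → sphere (0 : E) 1} {C : ℝ} {s : Set X}
    (hv : ScaleLipschitzOn x₀ C v s) (hx : x ∈ s) (hy : y ∈ s) :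
    dist (dist x x₀ • (v x : E)) (dist y x₀ • (v y : E)) ≤ (C + 1) * dist x y := by
  have hsplit : dist x x₀ • (v x : E) - dist y x₀ • (v y : E)
      = dist y x₀ • ((v x : E) - v y) + (dist x x₀ - dist y x₀) • (v x : E) := by
    rw [smul_sub, sub_smul]; abel
  rw [dist_eq_norm, hsplit]
  calc _ ≤ dist y x₀ * dist (v x) (v y) + |dist x x₀ - dist y x₀| := by
        refine (norm_add_le _ _).trans_eq ?_
        rw [norm_smul, norm_smul, norm_eq_of_mem_sphere, Real.norm_of_nonneg dist_nonneg,
          Real.norm_eq_abs, mul_one, Subtype.dist_eq, dist_eq_norm]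
    _ ≤ C * dist x y + dist x y := by
        rw [mul_comm]; exact add_le_add (hv x hx y hy) (abs_dist_sub_le x y x₀)
    _ = (C + 1) * dist x y := by ring

open Classical in
noncomputable def direction (e : sphere (0 : E) 1) (p : E) : sphere (0 : E) 1 :=
  if hp : p = 0 then e else ⟨‖p‖⁻¹ • p, by simp [norm_smul, hp]⟩

theorem norm_smul_direction (e : sphere (0 : E) 1) (p : E) :
    ‖p‖ • (direction e p : E) = p := by
  by_cases hp : p = 0
  · simp [hp]
  · simp [direction, hp, smul_smul]

theorem direction_smul (e q : sphere (0 : E) 1) {t : ℝ} (ht : 0 < t) :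
    direction e (t • (q : E)) = q := by
  have hq : (q : E) ≠ 0 := ne_zero_of_mem_unit_sphere q
  ext1
  simp [direction, ht.ne', hq, norm_smul, abs_of_pos ht, smul_smul, norm_eq_of_mem_sphere]

theorem dist_direction_mul_norm_le (e : sphere (0 : E) 1) (p q : E) :
    dist (direction e p) (direction e q) * ‖q‖ ≤ 2 * ‖p - q‖ := by
  by_cases hq : q = 0
  · simp [hq]
  by_cases hp : p = 0
  · simpa [hp] using mul_le_mul_of_nonneg_right (dist_sphere_le_two _ _) (norm_nonneg q)
  have hp' : ‖p‖ ≠ 0 := norm_ne_zero_iff.mpr hp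
  have key : ‖q‖ • (‖p‖⁻¹ • p - ‖q‖⁻¹ • q) = (p - q) + ((‖q‖ - ‖p‖) / ‖p‖) • p := by
    rw [smul_sub, smul_smul, smul_smul, mul_inv_cancel₀ (norm_ne_zero_iff.mpr hq), one_smul,
      div_eq_mul_inv, sub_mul, mul_inv_cancel₀ hp', sub_smul, one_smul]
    abel
  calc dist (direction e p) (direction e q) * ‖q‖
      = ‖‖q‖ • (‖p‖⁻¹ • p - ‖q‖⁻¹ • q)‖ := by
        simp [direction, hp, hq, Subtype.dist_eq, dist_eq_norm, norm_smul, mul_comm]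
    _ ≤ ‖p - q‖ + |‖q‖ - ‖p‖| := by
        rw [key]
        refine (norm_add_le _ _).trans_eq ?_
        rw [norm_smul, Real.norm_eq_abs, abs_div, abs_norm, div_mul_cancel₀ _ hp']
    _ ≤ 2 * ‖p - q‖ := by
        rw [abs_sub_comm]; linarith [abs_norm_sub_norm_le p q]

theorem scaleLipschitzOn_direction (e : sphere (0 : E) 1) {F : X → E} {L : ℝ} {s : Set X}
    (hnorm : ∀ x ∈ s, ‖F x‖ = dist x x₀)
    (hF : ∀ x ∈ s, ∀ y ∈ s, dist (F x) (F y) ≤ L * dist x y) :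
    ScaleLipschitzOn x₀ (2 * L) (fun x => direction e (F x)) s := by
  intro x hx y hy
  have key := dist_direction_mul_norm_le e (F x) (F y)
  rw [hnorm y hy, ← dist_eq_norm] at key
  rw [mul_assoc]
  exact key.trans (mul_le_mul_of_nonneg_left (hF x hx y hy) zero_le_two)

theorem annularExtension_iff [Nontrivial E] {a : ℕ → ℕ} :
    AnnularExtension x₀ E a ↔ ∀ r s M : ℝ, 0 < r → 0 < s → 1 < M →
      ∀ (A : ℕ → Set X) (f : ℕ → X → sphere (0 : E) 1),
        (∀ k, 1 ≤ k → A k ⊆ Annulus x₀ (r * M ^ a k) (r * M ^ (a k + 1))) →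
        (∀ k, 1 ≤ k → ∀ x ∈ A k, ∀ y ∈ A k, dist (f k x) (f k y) ≤ s / M ^ a k * dist x y) →
        ∃ c > (0 : ℝ), ∃ g : ℕ → X → sphere (0 : E) 1, ∀ k, 1 ≤ k →
          (∀ x ∈ Annulus x₀ (r * M ^ a k) (r * M ^ (a k + 1)),
            ∀ y ∈ Annulus x₀ (r * M ^ a k) (r * M ^ (a k + 1)),
              dist (g k x) (g k y) ≤ c / M ^ a k * dist x y) ∧
          ∀ x ∈ A k, g k x = f k x := by
  classical
  obtain ⟨e⟩ : Nonempty (sphere (0 : E) 1) := inferInstance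
  constructor
  · intro h r s M hr hs hM A f hA hf
    obtain ⟨c, hc, g, hg⟩ := h r s M hr hs hM A hA (fun k x => f k x)
      fun k hk x y => hf k hk x x.2 y y.2
    refine ⟨c, hc, fun k x => if hx : x ∈ _ then g k ⟨x, hx⟩ else e, fun k hk => ⟨?_, ?_⟩⟩
    · intro x hx y hy
      simpa only [dif_pos hx, dif_pos hy] using (hg k hk).1 ⟨x, hx⟩ ⟨y, hy⟩
    · intro x hx
      simpa only [dif_pos (hA k hk hx)] using (hg k hk).2 x hx (hA k hk hx)
  · intro h r s M hr hs hM A hA f hf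
    obtain ⟨c, hc, g, hg⟩ := h r s M hr hs hM A
      (fun k x => if hx : x ∈ A k then f k ⟨x, hx⟩ else e) hA fun k hk x hx y hy => by
        simpa only [dif_pos hx, dif_pos hy] using hf k hk ⟨x, hx⟩ ⟨y, hy⟩
    refine ⟨c, hc, fun k x => g k x, fun k hk => ⟨fun x y => (hg k hk).1 x x.2 y y.2, ?_⟩⟩
    intro x hx _
    simpa only [dif_pos hx] using (hg k hk).2 x hx

theorem NormPreservingExtension.annularExtension [Nontrivial E]
    (h : NormPreservingExtension x₀ E) {a : ℕ → ℕ} (ha : ∀ j k, j < k → a j + 2 ≤ a k) :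
    AnnularExtension x₀ E a := by
  obtain ⟨e⟩ : Nonempty (sphere (0 : E) 1) := inferInstance
  refine annularExtension_iff.mpr fun r s M hr hs hM A f hA hf => ?_
  have hM0 : 0 < M := one_pos.trans hM
  obtain ⟨φ, hφf, hφ⟩ := exists_scaleLipschitzOn_iUnion ha hr hs.le hM A hA f hf
  obtain ⟨F, hFext, hFnorm, L, hL0, hFL⟩ :=
    h _ (fun x => dist (x : X) x₀ • (φ x : E))
      (fun x => by simp [norm_smul, norm_eq_of_mem_sphere])
      ⟨_ + 1, by positivity, fun x y => hφ.dist_smul_le x.2 y.2⟩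
  have hdir : ScaleLipschitzOn x₀ (2 * L + 1) (fun x => direction e (F x)) univ :=
    (scaleLipschitzOn_direction e (fun x _ => hFnorm x) fun x _ y _ => hFL x y).weaken
      (by linarith)
  refine ⟨(2 * L + 1) / r, by positivity, fun _ x => direction e (F x), fun k hk =>
    ⟨fun x _ y hy => hdir.dist_le_div_pow hr hM0 (mem_univ x) (mem_univ y) hy.1, ?_⟩⟩
  intro x hx
  simp only [hFext ⟨x, ⟨k, hk, hx⟩⟩, hφf k hk hx]
  exact direction_smul e _ ((by positivity : 0 < r * M ^ a k).trans_le (hA k hk hx).1)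

theorem AnnularExtension.of_two_mul [Nontrivial E]
    (h : AnnularExtension x₀ E (fun k => 2 * k)) : AnnularExtension x₀ E (fun k => k) := by
  rw [annularExtension_iff] at h ⊢
  intro r s M hr hs hM A f hA hf
  have hM0 : 0 < M := one_pos.trans hM
  obtain ⟨c₁, hc₁, g₁, hg₁⟩ := h r s M hr hs hM (fun j => A (2 * j)) (fun j => f (2 * j))
    (fun j hj => hA _ (by omega)) (fun j hj => hf _ (by omega))
  have hodd : ∀ i : ℕ, 2 * (i + 1) - 1 = 2 * i + 1 ∧ 2 * (i + 1) = 2 * i + 1 + 1 :=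
    fun i => ⟨by omega, by ring⟩
  obtain ⟨c₂, hc₂, g₂, hg₂⟩ := h (r / M) (s * M) M (by positivity) (by positivity) hM
    (fun j => A (2 * j - 1)) (fun j => f (2 * j - 1))
    (fun j hj => by
      obtain ⟨i, rfl⟩ : ∃ i, j = i + 1 := ⟨j - 1, by omega⟩
      rw [(hodd i).1, (hodd i).2, annulus_div_mul_pow_succ r M hM0.ne']
      exact hA _ (by omega))
    (fun j hj x hx y hy => by
      obtain ⟨i, rfl⟩ : ∃ i, j = i + 1 := ⟨j - 1, by omega⟩
      rw [(hodd i).1] at hx hy ⊢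
      rw [(hodd i).2, pow_succ, mul_div_mul_right _ _ hM0.ne']
      exact hf _ (by omega) x hx y hy)
  refine ⟨max c₁ (c₂ / M), lt_max_of_lt_left hc₁,
    fun k => if Even k then g₁ (k / 2) else g₂ ((k + 1) / 2), fun k hk => ?_⟩
  rcases Nat.even_or_odd' k with ⟨i, rfl | rfl⟩
  · obtain ⟨hlip, hext⟩ := hg₁ i (by omega)
    simp only [even_two_mul, if_true, Nat.mul_div_cancel_left i two_pos]
    refine ⟨fun x hx y hy => (hlip x hx y hy).trans ?_, hext⟩
    gcongr
    exact le_max_left _ _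
  · obtain ⟨hlip, hext⟩ := hg₂ (i + 1) (by omega)
    have hi : (2 * i + 1 + 1) / 2 = i + 1 := by omega
    simp only [Nat.not_even_two_mul_add_one, if_false, hi]
    rw [(hodd i).2, annulus_div_mul_pow_succ r M hM0.ne'] at hlip
    rw [(hodd i).1] at hext
    refine ⟨fun x hx y hy => (hlip x hx y hy).trans ?_, hext⟩
    rw [pow_succ, ← div_div, div_right_comm]
    gcongr
    exact le_max_right _ _

theorem AnnularExtension.exists_scaleLipschitzOn [Nontrivial E] {a : ℕ → ℕ}
    (h : AnnularExtension x₀ E a) {r M C : ℝ} (hr : 0 < r) (hM : 1 < M) (hC : 0 ≤ C)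
    (S : ℕ → Set X) (hS : ∀ k, 1 ≤ k → S k ⊆ Annulus x₀ (r * M ^ a k) (r * M ^ (a k + 1)))
    (φ : X → sphere (0 : E) 1) (hφ : ∀ k, 1 ≤ k → ScaleLipschitzOn x₀ C φ (S k)) :
    ∃ C', ∃ G : ℕ → X → sphere (0 : E) 1, ∀ k, 1 ≤ k →
      ScaleLipschitzOn x₀ C' (G k) (Annulus x₀ (r * M ^ a k) (r * M ^ (a k + 1))) ∧
        EqOn (G k) φ (S k) := by
  have hM0 : 0 < M := one_pos.trans hM
  obtain ⟨c, hc, g, hg⟩ := annularExtension_iff.mp h r ((C + 1) / r) M hr (by positivity) hM S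
    (fun _ => φ) hS fun k hk x hx y hy =>
      ((hφ k hk).weaken (by linarith)).dist_le_div_pow hr hM0 hx hy (hS k hk hy).1
  exact ⟨c * r * M, g, fun k hk =>
    ⟨scaleLipschitzOn_of_dist_le hc.le hM0 subset_rfl (hg k hk).1, (hg k hk).2⟩⟩

theorem AnnularExtension.exists_blockwise_extension [Nontrivial E]
    (h : AnnularExtension x₀ E (fun k => k)) (j : ℕ) {C : ℝ} (hC : 0 ≤ C) (T : Set X)
    (φ : X → sphere (0 : E) 1) (hφ : ∀ k : ℕ, 1 ≤ k →
      ScaleLipschitzOn x₀ C φ {x | x ∈ T ∧ x ≠ x₀ ∧ (scale x₀ x - j) / 8 = k}) :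
    ∃ C', ∃ w : X → sphere (0 : E) 1,
      (∀ x ∈ T, x ≠ x₀ → 8 + j ≤ scale x₀ x → w x = φ x) ∧
      ∀ x y, x ≠ x₀ → y ≠ x₀ → (scale x₀ x - j) / 8 = (scale x₀ y - j) / 8 →
        8 + j ≤ scale x₀ y → dist (w x) (w y) * dist y x₀ ≤ C' * dist x y := by
  obtain ⟨C', G, hG⟩ := h.exists_scaleLipschitzOn (pow_pos two_pos j)
    (one_lt_pow₀ one_lt_two (by norm_num : 8 ≠ 0)) hC _
    (fun k _ x hx => (mem_annulus_two_pow_iff j k).mpr hx.2) φ hφ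
  refine ⟨C', fun x => G ((scale x₀ x - j) / 8).toNat x, fun x hx hx0 hxj => ?_,
    fun x y hx0 hy0 hxy hyj => ?_⟩
  · exact (hG _ (by omega)).2 ⟨hx, hx0, by omega⟩
  · dsimp only
    rw [hxy]
    exact (hG _ (by omega)).1 x ((mem_annulus_two_pow_iff j _).mpr ⟨hx0, by omega⟩)
      y ((mem_annulus_two_pow_iff j _).mpr ⟨hy0, by omega⟩)

theorem AnnularExtension.exists_extension_of_scaleLipschitzOn [Nontrivial E]
    (h : AnnularExtension x₀ E (fun k => k)) {A : Set X} {u : X → sphere (0 : E) 1} {L : ℝ}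
    (hL : 0 ≤ L) (hu : ScaleLipschitzOn x₀ L u A) :
    ∃ v : X → sphere (0 : E) 1, EqOn v u A ∧ ∃ C, ∀ x y, x ≠ x₀ → y ≠ x₀ →
      11 ≤ scale x₀ y → scale x₀ x ≤ scale x₀ y + 1 → scale x₀ y ≤ scale x₀ x + 1 →
        dist (v x) (v y) * dist y x₀ ≤ C * dist x y := by
  obtain ⟨C₁, w, hwu, hw⟩ :=
    h.exists_blockwise_extension 0 hL A u fun k _ => hu.mono fun x hx => hx.1
  -- `w` may jump between the scales `8k + 7` and `8k + 8`; there only the points of `A` are kept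
  set T : Set X := {x | x ∈ A ∨ ¬(scale x₀ x % 8 = 7 ∨ scale x₀ x % 8 = 0)}
  have hwT : ∀ k : ℕ, 1 ≤ k → ScaleLipschitzOn x₀ (max (max C₁ L) 4) w
      {x | x ∈ T ∧ x ≠ x₀ ∧ (scale x₀ x - (4 : ℕ)) / 8 = k} := by
    refine fun k hk => scaleLipschitzOn_of_close fun x hx y hy hx0 hy0 hxy hyx => ?_
    obtain ⟨hxT, -, hxk⟩ := hx
    obtain ⟨hyT, -, hyk⟩ := hy
    by_cases hblock : (scale x₀ x - (0 : ℕ)) / 8 = (scale x₀ y - (0 : ℕ)) / 8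
    · exact (hw x y hx0 hy0 hblock (by omega)).trans
        (mul_le_mul_of_nonneg_right (le_max_left _ _) dist_nonneg)
    have hxA : x ∈ A := hxT.resolve_right (by omega)
    have hyA : y ∈ A := hyT.resolve_right (by omega)
    rw [hwu x hxA hx0 (by omega), hwu y hyA hy0 (by omega)]
    exact (hu x hxA y hyA).trans (mul_le_mul_of_nonneg_right (le_max_right _ _) dist_nonneg)
  obtain ⟨C₂, w', hw'w, hw'⟩ := h.exists_blockwise_extension 4 (by positivity) T w hwT
  -- `v` switches between `w` and `w'` at the scales `≡ 1, 6 (mod 8)`, where the two agree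
  set v : X → sphere (0 : E) 1 := fun x =>
    if scale x₀ x < 10 then u x else if (scale x₀ x - 2) % 8 < 4 then w x else w' x
  have hvw : ∀ x, x ≠ x₀ → 10 ≤ scale x₀ x → (scale x₀ x - 1) % 8 < 6 → v x = w x := by
    intro x hx0 h10 h
    simp only [v, if_neg (not_lt.mpr h10)]
    split_ifs
    · rfl
    · exact hw'w x (Or.inr (by omega)) hx0 (by omega)
  have hvw' : ∀ x, 10 ≤ scale x₀ x → 4 ≤ (scale x₀ x - 2) % 8 → v x = w' x := by
    intro x h10 h
    simp only [v, if_neg (not_lt.mpr h10), if_neg (not_lt.mpr h)]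
  refine ⟨v, fun x hx => ?_, max C₁ C₂, fun x y hx0 hy0 hy11 hxy hyx => ?_⟩
  · by_cases h10 : scale x₀ x < 10
    · simp only [v, if_pos h10]
    have hx0 : x ≠ x₀ := fun hx0 => h10 (by simp [hx0, scale_self])
    by_cases hP : (scale x₀ x - 1) % 8 < 6
    · rw [hvw x hx0 (by omega) hP, hwu x hx hx0 (by omega)]
    · rw [hvw' x (by omega) (by omega), hw'w x (Or.inl hx) hx0 (by omega),
        hwu x hx hx0 (by omega)]
  by_cases hP : (scale x₀ x - 1) % 8 < 6 ∧ (scale x₀ y - 1) % 8 < 6 ∧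
      scale x₀ x / 8 = scale x₀ y / 8
  · rw [hvw x hx0 (by omega) hP.1, hvw y hy0 (by omega) hP.2.1]
    exact (hw x y hx0 hy0 (by omega) (by omega)).trans
      (mul_le_mul_of_nonneg_right (le_max_left _ _) dist_nonneg)
  · rw [hvw' x (by omega) (by omega), hvw' y (by omega) (by omega)]
    exact (hw' x y hx0 hy0 (by omega) (by omega)).trans
      (mul_le_mul_of_nonneg_right (le_max_right _ _) dist_nonneg)

theorem AnnularExtension.normPreservingExtension [Nontrivial E]
    (hdisc : ∃ ε > 0, ∀ x y : X, x ≠ y → ε ≤ dist x y)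
    (h : AnnularExtension x₀ E (fun k => k)) : NormPreservingExtension x₀ E := by
  classical
  obtain ⟨ε, hε, hsep⟩ := hdisc
  obtain ⟨e⟩ : Nonempty (sphere (0 : E) 1) := inferInstance
  intro A f hnorm ⟨L, hL0, hfL⟩
  set f₀ : X → E := fun x => if hx : x ∈ A then f ⟨x, hx⟩ else 0
  have hf₀ : ∀ x (hx : x ∈ A), f₀ x = f ⟨x, hx⟩ := fun x hx => dif_pos hx
  have hu : ScaleLipschitzOn x₀ (2 * L) (fun x => direction e (f₀ x)) A :=
    scaleLipschitzOn_direction e (fun x hx => by rw [hf₀ x hx, hnorm])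
      fun x hx y hy => by rw [hf₀ x hx, hf₀ y hy]; exact hfL ⟨x, hx⟩ ⟨y, hy⟩
  obtain ⟨v, hvu, C, hv⟩ := h.exists_extension_of_scaleLipschitzOn (by positivity) hu
  have hv' := scaleLipschitzOn_univ_of_close hε hsep hv
  refine ⟨fun x => dist x x₀ • (v x : E), fun a => ?_, fun x => ?_,
    ⟨_ + 1, by positivity, fun x y => hv'.dist_smul_le (mem_univ x) (mem_univ y)⟩⟩
  · show dist (a : X) x₀ • (v a : E) = f a
    rw [hvu a.2, ← hnorm a, ← hf₀ a a.2]
    exact norm_smul_direction e _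
  · simp [norm_smul, norm_eq_of_mem_sphere]

end Extension

/-- for a pointed discrete metric space `X` and `m ≥ 0`, the Lipschitz
norm-preserving extension property for maps into `ℝ^{m+1}` is equivalent to uniform
extendability of sphere-valued maps defined on subsets of annuli (in two versions). -/
theorem stmt_2 {X : Type*} [MetricSpace X] (x₀ : X)
    (hdisc : ∃ ε > 0, ∀ x y : X, x ≠ y → ε ≤ dist x y) (m : ℕ) :
    ((∀ (A : Set X) (f : A → EuclideanSpace ℝ (Fin (m + 1))),
        (∀ a : A, ‖f a‖ = dist (a : X) x₀) → LipFun f →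
        ∃ F : X → EuclideanSpace ℝ (Fin (m + 1)),
          (∀ a : A, F (a : X) = f a) ∧ (∀ x : X, ‖F x‖ = dist x x₀) ∧ LipFun F)
      ↔
      (∀ (r s M : ℝ), 0 < r → 0 < s → 1 < M →
        ∀ (A : ℕ → Set X),
          (∀ k : ℕ, 1 ≤ k → A k ⊆ Annulus x₀ (r * M ^ (2 * k)) (r * M ^ (2 * k + 1))) →
          ∀ f : (k : ℕ) → (A k) → Metric.sphere (0 : EuclideanSpace ℝ (Fin (m + 1))) 1,
            (∀ k : ℕ, 1 ≤ k → ∀ x y : A k,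
              dist (f k x) (f k y) ≤ s / M ^ (2 * k) * dist (x : X) (y : X)) →
          ∃ c > (0 : ℝ), ∃ g : (k : ℕ) → (Annulus x₀ (r * M ^ (2 * k)) (r * M ^ (2 * k + 1))) →
              Metric.sphere (0 : EuclideanSpace ℝ (Fin (m + 1))) 1,
            ∀ k : ℕ, 1 ≤ k →
              (∀ x y : (Annulus x₀ (r * M ^ (2 * k)) (r * M ^ (2 * k + 1))),
                dist (g k x) (g k y) ≤ c / M ^ (2 * k) * dist (x : X) (y : X)) ∧
              (∀ (x : X) (hA : x ∈ A k)
                  (hAn : x ∈ Annulus x₀ (r * M ^ (2 * k)) (r * M ^ (2 * k + 1))),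
                g k ⟨x, hAn⟩ = f k ⟨x, hA⟩)))
    ∧
    ((∀ (r s M : ℝ), 0 < r → 0 < s → 1 < M →
        ∀ (A : ℕ → Set X),
          (∀ k : ℕ, 1 ≤ k → A k ⊆ Annulus x₀ (r * M ^ (2 * k)) (r * M ^ (2 * k + 1))) →
          ∀ f : (k : ℕ) → (A k) → Metric.sphere (0 : EuclideanSpace ℝ (Fin (m + 1))) 1,
            (∀ k : ℕ, 1 ≤ k → ∀ x y : A k,
              dist (f k x) (f k y) ≤ s / M ^ (2 * k) * dist (x : X) (y : X)) →
          ∃ c > (0 : ℝ), ∃ g : (k : ℕ) → (Annulus x₀ (r * M ^ (2 * k)) (r * M ^ (2 * k + 1))) →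
              Metric.sphere (0 : EuclideanSpace ℝ (Fin (m + 1))) 1,
            ∀ k : ℕ, 1 ≤ k →
              (∀ x y : (Annulus x₀ (r * M ^ (2 * k)) (r * M ^ (2 * k + 1))),
                dist (g k x) (g k y) ≤ c / M ^ (2 * k) * dist (x : X) (y : X)) ∧
              (∀ (x : X) (hA : x ∈ A k)
                  (hAn : x ∈ Annulus x₀ (r * M ^ (2 * k)) (r * M ^ (2 * k + 1))),
                g k ⟨x, hAn⟩ = f k ⟨x, hA⟩))
      ↔
      (∀ (r s M : ℝ), 0 < r → 0 < s → 1 < M →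
        ∀ (A : ℕ → Set X),
          (∀ k : ℕ, 1 ≤ k → A k ⊆ Annulus x₀ (r * M ^ k) (r * M ^ (k + 1))) →
          ∀ f : (k : ℕ) → (A k) → Metric.sphere (0 : EuclideanSpace ℝ (Fin (m + 1))) 1,
            (∀ k : ℕ, 1 ≤ k → ∀ x y : A k,
              dist (f k x) (f k y) ≤ s / M ^ k * dist (x : X) (y : X)) →
          ∃ c > (0 : ℝ), ∃ g : (k : ℕ) → (Annulus x₀ (r * M ^ k) (r * M ^ (k + 1))) →
              Metric.sphere (0 : EuclideanSpace ℝ (Fin (m + 1))) 1,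
            ∀ k : ℕ, 1 ≤ k →
              (∀ x y : (Annulus x₀ (r * M ^ k) (r * M ^ (k + 1))),
                dist (g k x) (g k y) ≤ c / M ^ k * dist (x : X) (y : X)) ∧
              (∀ (x : X) (hA : x ∈ A k) (hAn : x ∈ Annulus x₀ (r * M ^ k) (r * M ^ (k + 1))),
                g k ⟨x, hAn⟩ = f k ⟨x, hA⟩))) := by
  have hAB : NormPreservingExtension x₀ (EuclideanSpace ℝ (Fin (m + 1))) →
      AnnularExtension x₀ (EuclideanSpace ℝ (Fin (m + 1))) (fun k => 2 * k) :=
    fun h => h.annularExtension fun j k hjk => by omega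
  have hBC : AnnularExtension x₀ (EuclideanSpace ℝ (Fin (m + 1))) (fun k => 2 * k) →
      AnnularExtension x₀ (EuclideanSpace ℝ (Fin (m + 1))) (fun k => k) :=
    AnnularExtension.of_two_mul
  have hCA : AnnularExtension x₀ (EuclideanSpace ℝ (Fin (m + 1))) (fun k => k) →
      NormPreservingExtension x₀ (EuclideanSpace ℝ (Fin (m + 1))) :=
    AnnularExtension.normPreservingExtension hdisc
  exact ⟨⟨hAB, hCA ∘ hBC⟩, ⟨hBC, hAB ∘ hCA⟩⟩
end

section
/- Let (X,d) be a pointed discrete metric space and m ≥ 0. If K ⊂ S^m is a Lipschitz extensor of X and f : A → K, A ⊂ X, is a function whose induced function f' : A → ℝ^{m+1}, f'(x) = |x|·f(x), is Lipschitz, then f extends to a function g : X → K whose induced function g' : X → ℝ^{m+1}, g'(x) = |x|·g(x), is Lipschitz. -/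
open Metric

def LipschitzExtensorWith (C : ℝ) (X Y : Type*) [MetricSpace X] [MetricSpace Y] : Prop :=
  ∀ lam > (0 : ℝ), ∀ (B : Set X) (u : B → Y),
    (∀ x y : B, dist (u x) (u y) ≤ lam * dist (x : X) (y : X)) →
    ∃ v : X → Y, (∀ b : B, v (b : X) = u b) ∧ ∀ x y : X, dist (v x) (v y) ≤ C * lam * dist x y

section NormedSpace

variable {E : Type*} [NormedAddCommGroup E] [NormedSpace ℝ E]

theorem norm_smul_le_abs {q : E} (hq : ‖q‖ ≤ 1) (c : ℝ) : ‖c • q‖ ≤ |c| := by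
  rw [norm_smul, Real.norm_eq_abs]
  exact mul_le_of_le_one_right (abs_nonneg c) hq

theorem norm_smul_sub_smul_le_s3 {p q : E} (hq : ‖q‖ ≤ 1) {s t : ℝ} (hs : 0 ≤ s) :
    ‖s • p - t • q‖ ≤ s * ‖p - q‖ + |s - t| := by
  have h : s • p - t • q = s • (p - q) + (s - t) • q := by
    rw [smul_sub, sub_smul]; abel
  calc ‖s • p - t • q‖ ≤ ‖s • (p - q)‖ + ‖(s - t) • q‖ := h ▸ norm_add_le _ _
    _ ≤ s * ‖p - q‖ + |s - t| := by
      rw [norm_smul, Real.norm_of_nonneg hs]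
      exact add_le_add le_rfl (norm_smul_le_abs hq _)

theorem mul_norm_sub_le_norm_smul_sub_smul_s3 {p q : E} (hq : ‖q‖ ≤ 1) {s t : ℝ} (hs : 0 ≤ s) :
    s * ‖p - q‖ ≤ ‖s • p - t • q‖ + |s - t| := by
  have h : s • (p - q) = (s • p - t • q) - (s - t) • q := by
    rw [smul_sub, sub_smul]; abel
  calc s * ‖p - q‖ = ‖s • (p - q)‖ := by rw [norm_smul, Real.norm_of_nonneg hs]
    _ ≤ ‖s • p - t • q‖ + ‖(s - t) • q‖ := h ▸ norm_sub_le _ _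
    _ ≤ ‖s • p - t • q‖ + |s - t| := add_le_add le_rfl (norm_smul_le_abs hq _)

end NormedSpace

theorem dist_le_two_of_subset_closedBall {E : Type*} [NormedAddCommGroup E] {K : Set E}
    (hK : K ⊆ closedBall 0 1) (k k' : K) : dist k k' ≤ 2 := by
  rw [Subtype.dist_eq]
  linarith [dist_triangle_right (k : E) k' 0, mem_closedBall.1 (hK k.2), mem_closedBall.1 (hK k'.2)]

section Pointed

variable {X : Type*} [MetricSpace X] {x₀ : X}

theorem lipFun_dist_smul_of_local {E : Type*} [NormedAddCommGroup E] [NormedSpace ℝ E]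
    {g : X → E} (hg : ∀ x, ‖g x‖ ≤ 1) {N : ℝ} (hN : 0 ≤ N)
    (hloc : ∀ x y, 0 < dist x x₀ → dist x x₀ ≤ dist y x₀ → dist y x₀ ≤ 2 * dist x x₀ →
      dist x x₀ * ‖g x - g y‖ ≤ N * dist x y) :
    LipFun fun x => dist x x₀ • g x := by
  have hsmul : ∀ x, ‖dist x x₀ • g x‖ ≤ dist x x₀ := fun x =>
    (norm_smul_le_abs (hg x) _).trans_eq (abs_of_nonneg dist_nonneg)
  have key : ∀ x y, dist x x₀ ≤ dist y x₀ →
      ‖dist x x₀ • g x - dist y x₀ • g y‖ ≤ (N + 3) * dist x y := by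
    intro x y hxy
    have hdiff := abs_dist_sub_le x y x₀
    have hd := dist_nonneg (x := x) (y := y)
    rcases lt_or_ge (dist y x₀) (2 * dist x x₀) with hnear | hfar
    · calc ‖dist x x₀ • g x - dist y x₀ • g y‖
          ≤ dist x x₀ * ‖g x - g y‖ + |dist x x₀ - dist y x₀| :=
            norm_smul_sub_smul_le_s3 (hg y) dist_nonneg
        _ ≤ N * dist x y + dist x y :=
            add_le_add (hloc x y (by linarith [dist_nonneg (x := y) (y := x₀)]) hxy hnear.le) hdiff
        _ ≤ (N + 3) * dist x y := by linarith
    · -- far apart: `dist x y ≥ |y| - |x| ≥ max |x| (|y| / 2)`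
      have hyx : dist y x₀ - dist x x₀ ≤ dist x y := by
        rw [abs_sub_comm] at hdiff; exact (le_abs_self _).trans hdiff
      calc ‖dist x x₀ • g x - dist y x₀ • g y‖ ≤ dist x x₀ + dist y x₀ :=
            (norm_sub_le _ _).trans (add_le_add (hsmul x) (hsmul y))
        _ ≤ (N + 3) * dist x y := by nlinarith
  refine ⟨N + 3, by linarith, fun x y => ?_⟩
  rw [dist_eq_norm]
  rcases le_total (dist x x₀) (dist y x₀) with h | h
  · exact key x y h
  · rw [norm_sub_rev, dist_comm x y]
    exact key y x h

theorem LipschitzExtensorWith.exists_glue {Y : Type*} [MetricSpace Y] {C D M r : ℝ}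
    (hext : LipschitzExtensorWith C X Y) (hD : 0 < D) (hdiam : ∀ y y' : Y, dist y y' ≤ D)
    (hM : 0 ≤ M) (hr : 0 < r) {u v : X → Y} (hu : ∀ p q, dist (u p) (u q) ≤ M / r * dist p q)
    (hv : ∀ p q, dist (v p) (v q) ≤ M / r * dist p q) {S : Set X} (huv : ∀ x ∈ S, u x = v x) :
    ∃ w : X → Y, (∀ x, dist x x₀ < r → w x = u x) ∧ (∀ x ∈ S, dist x x₀ < 2 * r → w x = u x) ∧
      (∀ x, 2 * r ≤ dist x x₀ → w x = v x) ∧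
      ∀ p q, dist (w p) (w q) ≤ C * (M + D) / r * dist p q := by
  classical
  let B : Set X := {x | dist x x₀ < r ∨ x ∈ S ∨ 2 * r ≤ dist x x₀}
  let h : B → Y := fun b => if dist (b : X) x₀ < 2 * r then u b else v b
  have hMD : M / r ≤ (M + D) / r := div_le_div_of_nonneg_right (by linarith) hr.le
  have mixed : ∀ x y : B, dist (x : X) x₀ < 2 * r → 2 * r ≤ dist (y : X) x₀ →
      dist (u x) (v y) ≤ (M + D) / r * dist (x : X) y := by
    intro x y hx hy
    by_cases hxS : (x : X) ∈ S
    · rw [huv x hxS]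
      exact (hv x y).trans (mul_le_mul_of_nonneg_right hMD dist_nonneg)
    · have hxr : dist (x : X) x₀ < r := by
        rcases x.2 with h | h | h
        exacts [h, absurd h hxS, by linarith]
      have hxy : r ≤ dist (x : X) y := by
        linarith [dist_triangle (y : X) x x₀, dist_comm (x : X) y]
      calc dist (u x) (v y) ≤ D := hdiam _ _
        _ ≤ (M + D) / r * r := by rw [div_mul_cancel₀ _ hr.ne']; linarith
        _ ≤ (M + D) / r * dist (x : X) y :=
          mul_le_mul_of_nonneg_left hxy (div_nonneg (by linarith) hr.le)
  obtain ⟨w, hw_eq, hw_lip⟩ := hext ((M + D) / r) (div_pos (by linarith) hr) B h (by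
    intro x y
    simp only [h]
    split_ifs with hx hy hy
    · exact (hu x y).trans (mul_le_mul_of_nonneg_right hMD dist_nonneg)
    · exact mixed x y hx (not_lt.1 hy)
    · rw [dist_comm, dist_comm (x : X)]
      exact mixed y x hy (not_lt.1 hx)
    · exact (hv x y).trans (mul_le_mul_of_nonneg_right hMD dist_nonneg))
  refine ⟨w, fun x hx => ?_, fun x hxS hx => ?_, fun x hx => ?_,
    fun p q => (hw_lip p q).trans_eq (by rw [mul_div_assoc])⟩
  · have hx2 : dist x x₀ < 2 * r := by linarith
    simpa [h, hx2] using hw_eq ⟨x, Or.inl hx⟩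
  · simpa [h, hx] using hw_eq ⟨x, Or.inr (Or.inl hxS)⟩
  · simpa [h, not_lt.2 hx] using hw_eq ⟨x, Or.inr (Or.inr hx)⟩

theorem LipschitzExtensorWith.exists_extension_of_le_dist {E : Type*} [NormedAddCommGroup E]
    [NormedSpace ℝ E] {K : Set E} {C lam r : ℝ} (hext : LipschitzExtensorWith C X K)
    (hK : K ⊆ closedBall 0 1) (hlam : 0 ≤ lam) {A : Set X} {f : A → K}
    (hf : ∀ a b : A, ‖dist (a : X) x₀ • (f a : E) - dist (b : X) x₀ • (f b : E)‖ ≤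
      lam * dist (a : X) b) (hr : 0 < r) :
    ∃ v : X → K, (∀ a : A, r ≤ dist (a : X) x₀ → v a = f a) ∧
      ∀ p q, dist (v p) (v q) ≤ C * (lam + 1) / r * dist p q := by
  have hunscale : ∀ a b : A, r ≤ dist (a : X) x₀ →
      r * dist (f a) (f b) ≤ (lam + 1) * dist (a : X) b := by
    intro a b ha
    rw [Subtype.dist_eq, dist_eq_norm]
    calc r * ‖(f a : E) - f b‖ ≤ dist (a : X) x₀ * ‖(f a : E) - f b‖ :=
          mul_le_mul_of_nonneg_right ha (norm_nonneg _)
      _ ≤ ‖dist (a : X) x₀ • (f a : E) - dist (b : X) x₀ • (f b : E)‖ +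
            |dist (a : X) x₀ - dist (b : X) x₀| :=
          mul_norm_sub_le_norm_smul_sub_smul_s3 (mem_closedBall_zero_iff.1 (hK (f b).2)) dist_nonneg
      _ ≤ (lam + 1) * dist (a : X) b := by linarith [hf a b, abs_dist_sub_le (a : X) b x₀]
  obtain ⟨v, hv_eq, hv_lip⟩ := hext ((lam + 1) / r) (by positivity)
    {x | x ∈ A ∧ r ≤ dist x x₀} (fun b => f ⟨b, b.2.1⟩) (fun x y => by
      rw [div_mul_eq_mul_div, le_div_iff₀ hr, mul_comm]
      exact hunscale ⟨x, x.2.1⟩ ⟨y, y.2.1⟩ x.2.2)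
  exact ⟨v, fun a ha => hv_eq ⟨a, a.2, ha⟩,
    fun p q => (hv_lip p q).trans_eq (by rw [mul_div_assoc])⟩

end Pointed

section ParityGlue

variable {α β : Type*}

def parityGlue (s : α → ℤ) (u w : ℤ → α → β) (x : α) : β :=
  if Even (s x) then u (s x) x else w (s x) x

theorem exists_eq_parityGlue_of_adjacent (s : α → ℤ) (u w : ℤ → α → β) {x y : α}
    (hxy : s y = s x ∨ s y = s x + 1)
    (hadj : s y = s x + 1 → w (s y) x = u (s x) x ∧ w (s x) y = u (s y) y) :
    ∃ φ, (φ = u (s x) ∨ φ = w (s x) ∨ φ = w (s x + 1)) ∧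
      φ x = parityGlue s u w x ∧ φ y = parityGlue s u w y := by
  unfold parityGlue
  rcases hxy with h | h
  · rw [h]
    by_cases he : Even (s x)
    · exact ⟨u (s x), Or.inl rfl, by rw [if_pos he], by rw [if_pos he]⟩
    · exact ⟨w (s x), Or.inr (Or.inl rfl), by rw [if_neg he], by rw [if_neg he]⟩
  · obtain ⟨hx, hy⟩ := hadj h
    rw [h] at hx hy ⊢
    by_cases he : Even (s x)
    · refine ⟨w (s x + 1), Or.inr (Or.inr rfl), by rw [if_pos he, hx], ?_⟩
      rw [if_neg (Int.even_add_one.not.2 (not_not.2 he))]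
    · refine ⟨w (s x), Or.inr (Or.inl rfl), by rw [if_neg he], ?_⟩
      rw [if_pos (Int.even_add_one.2 he), hy]

end ParityGlue

theorem two_zpow_log_le {r : ℝ} (hr : 0 < r) : (2 : ℝ) ^ Int.log 2 r ≤ r := by
  simpa using Int.zpow_log_le_self (b := 2) one_lt_two hr

theorem lt_two_zpow_log_add_one (r : ℝ) : r < (2 : ℝ) ^ (Int.log 2 r + 1) := by
  simpa using Int.lt_zpow_succ_log_self (b := 2) one_lt_two r

theorem Int.log_two_eq_or_eq_add_one {r t : ℝ} (hr : 0 < r) (hrt : r ≤ t) (ht : t ≤ 2 * r) :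
    Int.log 2 t = Int.log 2 r ∨ Int.log 2 t = Int.log 2 r + 1 := by
  have hlow : Int.log 2 r ≤ Int.log 2 t := Int.log_mono_right hr hrt
  have hup : Int.log 2 t < Int.log 2 r + 1 + 1 := by
    refine (Int.lt_zpow_iff_log_lt (b := 2) one_lt_two (hr.trans_le hrt)).1 ?_
    rw [Nat.cast_ofNat, zpow_add_one₀ two_ne_zero]
    linarith [lt_two_zpow_log_add_one r]
  omega

section Annuli

variable {X : Type*} [MetricSpace X]

noncomputable def annulusIndex (x₀ x : X) : ℤ := Int.log 2 (dist x x₀)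

variable {x₀ : X}

theorem two_zpow_annulusIndex_le {x : X} (hx : 0 < dist x x₀) :
    (2 : ℝ) ^ annulusIndex x₀ x ≤ dist x x₀ :=
  two_zpow_log_le hx

theorem lt_two_zpow_annulusIndex_add_one (x : X) :
    dist x x₀ < (2 : ℝ) ^ (annulusIndex x₀ x + 1) :=
  lt_two_zpow_log_add_one _

theorem dist_parityGlue_annulusIndex_le {Y : Type*} [MetricSpace Y] {u w : ℤ → X → Y}
    {c₁ c₂ : ℝ} (hc₁ : 0 ≤ c₁) (hc₂ : 0 ≤ c₂)
    (hu : ∀ n p q, dist (u n p) (u n q) ≤ c₁ / 2 ^ n * dist p q)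
    (hw : ∀ n p q, dist (w n p) (w n q) ≤ c₂ / 2 ^ n * dist p q)
    (hlow : ∀ n x, dist x x₀ < 2 ^ n → w n x = u (n - 1) x)
    (hup : ∀ n x, 2 * 2 ^ n ≤ dist x x₀ → w n x = u (n + 1) x)
    {x y : X} (hx : 0 < dist x x₀) (hxy : dist x x₀ ≤ dist y x₀) (hyx : dist y x₀ ≤ 2 * dist x x₀) :
    dist x x₀ * dist (parityGlue (annulusIndex x₀) u w x) (parityGlue (annulusIndex x₀) u w y) ≤
      2 * (c₁ + c₂) * dist x y := by
  set s := annulusIndex x₀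
  obtain ⟨φ, hφ, hφx, hφy⟩ := exists_eq_parityGlue_of_adjacent s u w
    (Int.log_two_eq_or_eq_add_one hx hxy hyx) fun h => by
      refine ⟨?_, ?_⟩
      · rw [hlow _ _ (h ▸ lt_two_zpow_annulusIndex_add_one x), h, add_sub_cancel_right]
      · have hy := two_zpow_annulusIndex_le (hx.trans_le hxy)
        rw [show annulusIndex x₀ y = s x + 1 from h, zpow_add_one₀ two_ne_zero, mul_comm] at hy
        rw [hup _ _ hy, h]
  have hφlip : dist (φ x) (φ y) ≤ (c₁ + c₂) / 2 ^ s x * dist x y := by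
    rcases hφ with rfl | rfl | rfl
    · exact (hu _ x y).trans (by gcongr; linarith)
    · exact (hw _ x y).trans (by gcongr; linarith)
    · refine (hw _ x y).trans ?_
      gcongr
      · linarith
      · exact one_le_two
      · exact Int.le_add_one le_rfl
  rw [← hφx, ← hφy]
  calc dist x x₀ * dist (φ x) (φ y) ≤ 2 ^ (s x + 1) * ((c₁ + c₂) / 2 ^ s x * dist x y) :=
        mul_le_mul (lt_two_zpow_annulusIndex_add_one x).le hφlip dist_nonneg (by positivity)
    _ = 2 * (c₁ + c₂) * dist x y := by
      rw [zpow_add_one₀ two_ne_zero]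
      field_simp

theorem parityGlue_annulusIndex_eq {Y : Type*} {A : Set X} {f : A → Y} {u w : ℤ → X → Y}
    (hu : ∀ n (a : A), 2 ^ (n - 1) ≤ dist (a : X) x₀ → u n a = f a)
    (hw : ∀ n (a : A), 2 ^ n ≤ dist (a : X) x₀ → dist (a : X) x₀ < 2 ^ (n + 1) → w n a = f a)
    (a : A) (ha : (a : X) ≠ x₀) : parityGlue (annulusIndex x₀) u w a = f a := by
  have hlow := two_zpow_annulusIndex_le (dist_pos.2 ha)
  unfold parityGlue
  split_ifs
  · exact hu _ a ((zpow_le_zpow_right₀ one_le_two (Int.sub_le_self _ zero_le_one)).trans hlow)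
  · exact hw _ a hlow (lt_two_zpow_annulusIndex_add_one (a : X))

theorem LipschitzExtensorWith.exists_extension_annulus_bound {E : Type*} [NormedAddCommGroup E]
    [NormedSpace ℝ E] {K : Set E} {C lam : ℝ} (hext : LipschitzExtensorWith C X K) (hC : 0 ≤ C)
    (hK : K ⊆ closedBall 0 1) (hlam : 0 ≤ lam) {A : Set X} {f : A → K}
    (hf : ∀ a b : A, ‖dist (a : X) x₀ • (f a : E) - dist (b : X) x₀ • (f b : E)‖ ≤
      lam * dist (a : X) b) :
    ∃ g : X → K, (∀ a : A, (a : X) ≠ x₀ → g a = f a) ∧ ∃ N, 0 ≤ N ∧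
      ∀ x y, 0 < dist x x₀ → dist x x₀ ≤ dist y x₀ → dist y x₀ ≤ 2 * dist x x₀ →
        dist x x₀ * dist (g x) (g y) ≤ N * dist x y := by
  have hpow : ∀ n : ℤ, (0 : ℝ) < 2 ^ n := fun n => zpow_pos two_pos n
  have hpow_mono : ∀ {m n : ℤ}, m ≤ n → (2 : ℝ) ^ m ≤ 2 ^ n := zpow_le_zpow_right₀ one_le_two
  have hhalf : ∀ (c : ℝ) (n : ℤ), c / 2 ^ (n - 1) = 2 * c / 2 ^ n := fun c n => by
    rw [zpow_sub_one₀ two_ne_zero]; field_simp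
  set a := C * (lam + 1)
  have ha : 0 ≤ a := mul_nonneg hC (by linarith)
  choose u hu_eq hu_lip using fun n : ℤ =>
    hext.exists_extension_of_le_dist hK hlam hf (hpow (n - 1))
  have hu : ∀ n p q, dist (u n p) (u n q) ≤ 2 * a / 2 ^ n * dist p q := fun n p q =>
    (hu_lip n p q).trans_eq (by rw [hhalf])
  -- `w n` bridges `u (n - 1)` and `u (n + 1)` across the annulus of index `n`
  choose w hw_low hw_A hw_up hw_lip using fun n : ℤ =>
    hext.exists_glue (x₀ := x₀) two_pos (dist_le_two_of_subset_closedBall hK)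
      (by positivity : 0 ≤ 4 * a) (hpow n) (u := u (n - 1)) (v := u (n + 1))
      (S := {x | x ∈ A ∧ 2 ^ n ≤ dist x x₀})
      (fun p q => (hu (n - 1) p q).trans_eq (by rw [hhalf]; ring))
      (fun p q => (hu (n + 1) p q).trans (by
        rw [zpow_add_one₀ two_ne_zero, mul_comm _ (2 : ℝ), ← div_div]; gcongr; linarith))
      (fun x ⟨hxA, hx⟩ => by
        rw [hu_eq (n - 1) ⟨x, hxA⟩ ((hpow_mono (by omega)).trans hx),
          hu_eq (n + 1) ⟨x, hxA⟩ ((hpow_mono (by omega)).trans hx)])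
  refine ⟨parityGlue (annulusIndex x₀) u w, parityGlue_annulusIndex_eq hu_eq
    (fun n b hlow hup => ?_), 2 * (2 * a + C * (4 * a + 2)), by positivity,
    fun x y hx hxy hyx => dist_parityGlue_annulusIndex_le (by positivity) (by positivity) hu
      hw_lip hw_low hw_up hx hxy hyx⟩
  rw [hw_A n b ⟨b.2, hlow⟩ (by rwa [zpow_add_one₀ two_ne_zero, mul_comm] at hup)]
  exact hu_eq _ b ((hpow_mono (by omega)).trans hlow)

end Annuli

theorem stmt_3_general {X : Type*} [MetricSpace X] (x₀ : X)
    (m : ℕ) (K : Set (EuclideanSpace ℝ (Fin (m + 1))))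
    (hK : K ⊆ Metric.sphere (0 : EuclideanSpace ℝ (Fin (m + 1))) 1)
    (hext : ∃ C > (0 : ℝ), ∀ lam > (0 : ℝ), ∀ (B : Set X) (u : B → K),
        (∀ x y : B, dist (u x) (u y) ≤ lam * dist (x : X) (y : X)) →
        ∃ v : X → K, (∀ b : B, v (b : X) = u b) ∧
          ∀ x y : X, dist (v x) (v y) ≤ C * lam * dist x y)
    (A : Set X) (f : A → K)
    (hf : LipFun (fun a : A => dist (a : X) x₀ • ((f a : EuclideanSpace ℝ (Fin (m + 1)))))) :
    ∃ g : X → K, (∀ a : A, g (a : X) = f a) ∧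
      LipFun (fun x : X => dist x x₀ • ((g x : EuclideanSpace ℝ (Fin (m + 1))))) := by
  classical
  obtain ⟨C, hC, hext⟩ := hext
  obtain ⟨lam, hlam, hf⟩ := hf
  have hball : K ⊆ closedBall 0 1 := hK.trans sphere_subset_closedBall
  obtain ⟨g, hgf, N, hN, hloc⟩ := LipschitzExtensorWith.exists_extension_annulus_bound (x₀ := x₀)
    hext hC.le hball hlam fun a b => by simpa only [dist_eq_norm, Subtype.dist_eq] using hf a b
  let G : X → K := fun x => if h : x ∈ A then f ⟨x, h⟩ else g x
  have hG : ∀ x, x ≠ x₀ → G x = g x := fun x hx => by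
    by_cases h : x ∈ A
    · simp only [G, dif_pos h]
      exact (hgf ⟨x, h⟩ hx).symm
    · simp only [G, dif_neg h]
  refine ⟨G, fun a => dif_pos a.2, lipFun_dist_smul_of_local
    (fun x => mem_closedBall_zero_iff.1 (hball (G x).2)) hN fun x y hx hxy hyx => ?_⟩
  rw [hG x (dist_pos.1 hx), hG y (dist_pos.1 (hx.trans_le hxy)), ← dist_eq_norm,
    ← Subtype.dist_eq]
  exact hloc x y hx hxy hyx

/-- if `K ⊂ Sᵐ` is a Lipschitz extensor of a pointed discrete metric space `X`
and `f : A → K` induces a Lipschitz map `f'(x) = |x|·f(x)`, then `f` extends to `g : X → K`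
inducing a Lipschitz map `g'`. -/
theorem stmt_3 {X : Type*} [MetricSpace X] (x₀ : X)
    (hdisc : ∃ ε > 0, ∀ x y : X, x ≠ y → ε ≤ dist x y)
    (m : ℕ) (K : Set (EuclideanSpace ℝ (Fin (m + 1))))
    (hK : K ⊆ Metric.sphere (0 : EuclideanSpace ℝ (Fin (m + 1))) 1)
    (hext : ∃ C > (0 : ℝ), ∀ lam > (0 : ℝ), ∀ (B : Set X) (u : B → K),
        (∀ x y : B, dist (u x) (u y) ≤ lam * dist (x : X) (y : X)) →
        ∃ v : X → K, (∀ b : B, v (b : X) = u b) ∧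
          ∀ x y : X, dist (v x) (v y) ≤ C * lam * dist x y)
    (A : Set X) (f : A → K)
    (hf : LipFun (fun a : A => dist (a : X) x₀ • ((f a : EuclideanSpace ℝ (Fin (m + 1)))))) :
    ∃ g : X → K, (∀ a : A, g (a : X) = f a) ∧
      LipFun (fun x : X => dist x x₀ • ((g x : EuclideanSpace ℝ (Fin (m + 1))))) :=
  stmt_3_general x₀ m K hK hext A f hf
end

section
/- Let (X,d) be a pointed metric space, m ≥ 0, and f : X → S^m a continuous function. If the function f' : X → ℝ^{m+1} defined by f'(x) = |x|·f(x) is asymptotically Lipschitz, then f is Higson sublinear. -/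
/-- A function `s : [0,∞) → [0,∞)` is *asymptotically sublinear* if it is continuous,
nonnegative on `[0,∞)`, and for each non-constant linear function `r ↦ a·r + c`
(`a > 0`, `c ≥ 0`) there is `M ≥ 0` with `s(r) ≤ a·r + c + M` for all `r ≥ 0`. -/
def AsympSublinear (s : ℝ → ℝ) : Prop :=
  ContinuousOn s (Set.Ici 0) ∧ (∀ r : ℝ, 0 ≤ r → 0 ≤ s r) ∧
  ∀ a : ℝ, 0 < a → ∀ c : ℝ, 0 ≤ c → ∃ M : ℝ, 0 ≤ M ∧
    ∀ r : ℝ, 0 ≤ r → s r ≤ a * r + c + M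

/-- `f : X → Y` is *Higson sublinear* (with base point `x₀`) if for every asymptotically
sublinear `s` and all sequences `xₙ, yₙ → ∞` with `d(xₙ,yₙ) ≤ s(|xₙ|)`, one has
`d(f xₙ, f yₙ) → 0`. -/
def HigsonSublinear {X Y : Type*} [MetricSpace X] [MetricSpace Y] (x₀ : X) (f : X → Y) :
    Prop :=
  ∀ s : ℝ → ℝ, AsympSublinear s →
    ∀ x y : ℕ → X,
      Filter.Tendsto (fun n => dist (x n) x₀) Filter.atTop Filter.atTop →
      Filter.Tendsto (fun n => dist (y n) x₀) Filter.atTop Filter.atTop →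
      (∀ n, dist (x n) (y n) ≤ s (dist (x n) x₀)) →
      Filter.Tendsto (fun n => dist (f (x n)) (f (y n))) Filter.atTop (nhds 0)

/-!
Write `r = |x|`. Since `f` takes unit values, `r · ‖f x - f y‖` differs from
`‖r • f x - |y| • f y‖` by at most `||x| - |y|| ≤ d(x, y)`, so asymptotic Lipschitz control of
`f'` gives `r · d(f x, f y) ≤ (λ + 1) d(x, y) + M ≤ (λ + 1) s(r) + M`. The right-hand side is
`o(r)` because `s` is sublinear, hence `d(f x, f y) → 0` as `r → ∞`.
-/

open Filter Topology Asymptotics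

theorem AsympSublinear.isLittleO_id {s : ℝ → ℝ} (hs : AsympSublinear s) : s =o[atTop] id := by
  obtain ⟨-, hs_nonneg, hs_le⟩ := hs
  refine IsLittleO.of_bound fun ε hε => ?_
  obtain ⟨M, -, hM⟩ := hs_le (ε / 2) (half_pos hε) 0 le_rfl
  filter_upwards [eventually_ge_atTop (2 * M / ε), eventually_ge_atTop 0] with r hr hr0
  have hMr : 2 * M ≤ ε * r := by rwa [div_le_iff₀ hε, mul_comm r] at hr
  rw [Real.norm_of_nonneg (hs_nonneg r hr0), id, Real.norm_of_nonneg hr0]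
  linarith [hM r hr0]

theorem AsympSublinear.tendsto_affine_div {s : ℝ → ℝ} (hs : AsympSublinear s) (L M : ℝ) :
    Tendsto (fun r => (L * s r + M) / r) atTop (𝓝 0) := by
  have hdiv : Tendsto (fun r => s r / r) atTop (𝓝 0) := hs.isLittleO_id.tendsto_div_nhds_zero
  have hM : Tendsto (fun r : ℝ => M / r) atTop (𝓝 0) := tendsto_const_nhds.div_atTop tendsto_id
  simpa only [add_div, mul_div_assoc, mul_zero, zero_add] using (hdiv.const_mul L).add hM

theorem mul_norm_sub_le_norm_smul_sub_smul_add {E : Type*} [SeminormedAddCommGroup E]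
    [NormedSpace ℝ E] {a : ℝ} (ha : 0 ≤ a) (b : ℝ) (u : E) {v : E} (hv : ‖v‖ = 1) :
    a * ‖u - v‖ ≤ ‖a • u - b • v‖ + |a - b| :=
  calc a * ‖u - v‖ = ‖a • (u - v)‖ := by rw [norm_smul, Real.norm_of_nonneg ha]
    _ = ‖(a • u - b • v) + (b - a) • v‖ := by congr 1; module
    _ ≤ ‖a • u - b • v‖ + |a - b| := by
        grw [norm_add_le, norm_smul, hv, mul_one, Real.norm_eq_abs, abs_sub_comm]

theorem dist_mul_dist_le_of_norm_smul_sub_le {X E : Type*} [PseudoMetricSpace X]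
    [SeminormedAddCommGroup E] [NormedSpace ℝ E] {x₀ : X} {f : X → E}
    (hf1 : ∀ x, ‖f x‖ = 1) {lam M : ℝ}
    (hAL : ∀ x y, ‖dist x x₀ • f x - dist y x₀ • f y‖ ≤ lam * dist x y + M) (x y : X) :
    dist x x₀ * dist (f x) (f y) ≤ (lam + 1) * dist x y + M := by
  rw [dist_eq_norm]
  grw [mul_norm_sub_le_norm_smul_sub_smul_add dist_nonneg (dist y x₀) (f x) (hf1 y), hAL,
    abs_dist_sub_le x y x₀]
  linarith

theorem stmt_11_general {X : Type*} [MetricSpace X] (x₀ : X) (m : ℕ)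
    (f : X → EuclideanSpace ℝ (Fin (m + 1)))
    (hf1 : ∀ x, ‖f x‖ = 1)
    (hAL : ∃ lam M : ℝ, 0 ≤ lam ∧ 0 ≤ M ∧
      ∀ x y : X, ‖dist x x₀ • f x - dist y x₀ • f y‖ ≤ lam * dist x y + M) :
    HigsonSublinear x₀ f := by
  obtain ⟨lam, M, hlam, -, hAL⟩ := hAL
  intro s hs x y hx _ hxy
  refine squeeze_zero' (Eventually.of_forall fun n => dist_nonneg) ?_
    ((hs.tendsto_affine_div (lam + 1) M).comp hx)
  filter_upwards [hx.eventually_gt_atTop 0] with n hn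
  rw [Function.comp_apply, le_div_iff₀ hn, mul_comm]
  grw [dist_mul_dist_le_of_norm_smul_sub_le hf1 hAL, hxy n]

/-- if `f : X → Sᵐ` is continuous and `f'(x) = |x|·f(x)` is asymptotically
Lipschitz, then `f` is Higson sublinear. -/
theorem stmt_11 {X : Type*} [MetricSpace X] (x₀ : X) (m : ℕ)
    (f : X → EuclideanSpace ℝ (Fin (m + 1)))
    (hf1 : ∀ x, ‖f x‖ = 1) (hfc : Continuous f)
    (hAL : ∃ lam M : ℝ, 0 ≤ lam ∧ 0 ≤ M ∧
      ∀ x y : X, ‖dist x x₀ • f x - dist y x₀ • f y‖ ≤ lam * dist x y + M) :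
    HigsonSublinear x₀ f :=
  stmt_11_general x₀ m f hf1 hAL
end

section
/- Let (X,d) be a pointed proper metric space, and let s : X → [0,∞) be an asymptotically Lipschitz function for which there exist constants c, b > 0 with s(x) ≥ c·|x| − b for all x ∈ X. Then for any function f : X → S^m (m ≥ 0) the following are equivalent: (a) the function f' : X → ℝ^{m+1}, f'(x) = |x|·f(x), is asymptotically Lipschitz; (b) the function F : X → ℝ^{m+1}, F(x) = s(x)·f(x), is asymptotically Lipschitz. -/
theorem asympLip_iff_exists {X Y : Type*} [MetricSpace X] [MetricSpace Y] {f : X → Y} :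
    AsympLip f ↔ ∃ lam M : ℝ, ∀ x y, dist (f x) (f y) ≤ lam * dist x y + M := by
  refine ⟨fun ⟨lam, M, _, _, h⟩ => ⟨lam, M, h⟩, fun ⟨lam, M, h⟩ => ?_⟩
  refine ⟨max lam 0, max M 0, le_max_right _ _, le_max_right _ _, fun x y => (h x y).trans ?_⟩
  gcongr
  exacts [le_max_left _ _, le_max_left _ _]

theorem LipschitzWith.asympLip {X Y : Type*} [MetricSpace X] [MetricSpace Y] {K : NNReal}
    {f : X → Y} (hf : LipschitzWith K f) : AsympLip f :=
  ⟨K, 0, K.2, le_rfl, fun x y => by simpa using hf.dist_le_mul x y⟩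

theorem abs_norm_smul_sub_smul_sub_le {E : Type*} [NormedAddCommGroup E] [NormedSpace ℝ E]
    {u v : E} (hu : ‖u‖ = 1) (t : ℝ) {t' : ℝ} (ht' : 0 ≤ t') :
    |‖t • u - t' • v‖ - t' * ‖u - v‖| ≤ |t - t'| := by
  have hsplit : t • u - t' • v = (t - t') • u + t' • (u - v) := by module
  have hnorm : ‖t' • (u - v)‖ = t' * ‖u - v‖ := by
    rw [norm_smul, Real.norm_of_nonneg ht']
  simpa [hsplit, ← hnorm, norm_smul, hu] using
    abs_norm_sub_norm_le ((t - t') • u + t' • (u - v)) (t' • (u - v))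

section SmulUnit

variable {X E : Type*} [MetricSpace X] [NormedAddCommGroup E] [NormedSpace ℝ E]
  {f : X → E}

theorem asympLip_smul_iff {t : X → ℝ} (ht0 : ∀ x, 0 ≤ t x) (ht : AsympLip t)
    (hf : ∀ x, ‖f x‖ = 1) :
    AsympLip (fun x => t x • f x) ↔
      ∃ lam M : ℝ, ∀ x y, t y * ‖f x - f y‖ ≤ lam * dist x y + M := by
  obtain ⟨l, M, -, -, hl⟩ := ht
  have key x y := abs_le.mp (abs_norm_smul_sub_smul_sub_le (v := f y) (hf x) (t x) (ht0 y))
  have ht_diff x y : |t x - t y| ≤ l * dist x y + M := by simpa [Real.dist_eq] using hl x y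
  rw [asympLip_iff_exists]
  constructor
  · rintro ⟨l', M', h⟩
    refine ⟨l + l', M + M', fun x y => ?_⟩
    have := h x y
    rw [dist_eq_norm] at this
    linarith [key x y, ht_diff x y]
  · rintro ⟨l', M', h⟩
    refine ⟨l + l', M + M', fun x y => ?_⟩
    rw [dist_eq_norm]
    linarith [key x y, ht_diff x y, h x y]

theorem AsympLip.smul_of_le_affine {t₁ t₂ : X → ℝ} (ht₁0 : ∀ x, 0 ≤ t₁ x) (ht₁ : AsympLip t₁)
    (ht₂0 : ∀ x, 0 ≤ t₂ x) (ht₂ : AsympLip t₂) (hf : ∀ x, ‖f x‖ = 1) {A B : ℝ} (hA : 0 ≤ A)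
    (hle : ∀ x, t₂ x ≤ A * t₁ x + B) (h : AsympLip fun x => t₁ x • f x) :
    AsympLip fun x => t₂ x • f x := by
  obtain ⟨l, M, hlM⟩ := (asympLip_smul_iff ht₁0 ht₁ hf).mp h
  refine (asympLip_smul_iff ht₂0 ht₂ hf).mpr ⟨A * l, A * M + 2 * |B|, fun x y => ?_⟩
  have hdiam : ‖f x - f y‖ ≤ 2 := by
    linarith [norm_sub_le (f x) (f y), hf x, hf y]
  calc t₂ y * ‖f x - f y‖
      ≤ (A * t₁ y + B) * ‖f x - f y‖ := by gcongr; exact hle y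
    _ = A * (t₁ y * ‖f x - f y‖) + B * ‖f x - f y‖ := by ring
    _ ≤ A * (l * dist x y + M) + |B| * 2 := by
        gcongr
        · exact hlM x y
        · exact (le_abs_self B).trans (by gcongr)
    _ = A * l * dist x y + (A * M + 2 * |B|) := by ring

end SmulUnit

theorem stmt_13_general {X : Type*} [MetricSpace X] (x₀ : X) (m : ℕ)
    (s : X → ℝ) (hs0 : ∀ x, 0 ≤ s x) (hsAL : AsympLip s)
    (c b : ℝ) (hc : 0 < c)
    (hlow : ∀ x : X, c * dist x x₀ - b ≤ s x)
    (f : X → EuclideanSpace ℝ (Fin (m + 1))) (hf1 : ∀ x, ‖f x‖ = 1) :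
    AsympLip (fun x : X => dist x x₀ • f x) ↔ AsympLip (fun x : X => s x • f x) := by
  have hnorm0 : ∀ x, 0 ≤ dist x x₀ := fun x => dist_nonneg
  have hnormAL : AsympLip fun x => dist x x₀ := (LipschitzWith.dist_left x₀).asympLip
  obtain ⟨l, M, hl, hM, hs⟩ := hsAL
  have hs_le x : s x ≤ l * dist x x₀ + (M + s x₀) := by
    linarith [(abs_le.mp (Real.dist_eq _ _ ▸ hs x x₀)).2]
  have hnorm_le x : dist x x₀ ≤ c⁻¹ * s x + b / c := by
    rw [div_eq_inv_mul, ← mul_add, le_inv_mul_iff₀ hc]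
    linarith [hlow x]
  exact ⟨AsympLip.smul_of_le_affine hnorm0 hnormAL hs0 ⟨l, M, hl, hM, hs⟩ hf1 hl hs_le,
    AsympLip.smul_of_le_affine hs0 ⟨l, M, hl, hM, hs⟩ hnorm0 hnormAL hf1 (inv_nonneg.2 hc.le)
      hnorm_le⟩

/-- if `X` is a pointed proper metric space and `s : X → [0,∞)` is an
asymptotically Lipschitz function with `s(x) ≥ c·|x| − b` (`c, b > 0`), then for
`f : X → Sᵐ`, the map `f'(x) = |x|·f(x)` is asymptotically Lipschitz iff
`F(x) = s(x)·f(x)` is asymptotically Lipschitz. -/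
theorem stmt_13 {X : Type*} [MetricSpace X] [ProperSpace X] (x₀ : X) (m : ℕ)
    (s : X → ℝ) (hs0 : ∀ x, 0 ≤ s x) (hsAL : AsympLip s)
    (c b : ℝ) (hc : 0 < c) (hb : 0 < b)
    (hlow : ∀ x : X, c * dist x x₀ - b ≤ s x)
    (f : X → EuclideanSpace ℝ (Fin (m + 1))) (hf1 : ∀ x, ‖f x‖ = 1) :
    AsympLip (fun x : X => dist x x₀ • f x) ↔ AsympLip (fun x : X => s x • f x) :=
  stmt_13_general x₀ m s hs0 hsAL c b hc hlow f hf1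
end

section
/- Let (X,d_X) and (Y,d_Y) be pointed metric spaces and let f : A → Y, A ⊂ X, be an asymptotically Lipschitz function such that |f(x)| ≥ c·|x| − b for all x ∈ A, for some constants c, b > 0. Then for every R > 0 there exist a constant v > 0 and an asymptotically Lipschitz extension g : B(A,R) → Y of f, where B(A,R) = {x ∈ X : d_X(x,A) < R}, such that |g(x)| ≥ c·|x| − v for all x ∈ B(A,R). -/
/-- The open `R`-neighborhood `B(A,R) = {x : d(x,A) < R}` of a set `A`. -/
def NbhdOf {X : Type*} [MetricSpace X] (A : Set X) (R : ℝ) : Set X :=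
  {x | ∃ a ∈ A, dist x a < R}

/-- an asymptotically Lipschitz `f : A → Y` with `|f(x)| ≥ c·|x| − b` on `A`
extends, for every `R > 0`, to an asymptotically Lipschitz `g : B(A,R) → Y` with
`|g(x)| ≥ c·|x| − v` for some constant `v > 0`. -/
theorem stmt_14 {X Y : Type*} [MetricSpace X] [MetricSpace Y] (x₀ : X) (y₀ : Y)
    (A : Set X) (f : A → Y) (hAL : AsympLip f)
    (c b : ℝ) (hc : 0 < c) (hb : 0 < b)
    (hlow : ∀ a : A, c * dist (a : X) x₀ - b ≤ dist (f a) y₀)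
    (R : ℝ) (hR : 0 < R) :
    ∃ v : ℝ, 0 < v ∧ ∃ g : NbhdOf A R → Y,
      (∀ (x : X) (hx : x ∈ NbhdOf A R) (ha : x ∈ A), g ⟨x, hx⟩ = f ⟨x, ha⟩) ∧
      AsympLip g ∧
      ∀ x : NbhdOf A R, c * dist (x : X) x₀ - v ≤ dist (g x) y₀ := by
  classical
  obtain ⟨lam, M, hlam, hM, hf⟩ := hAL
  -- choose for each x in the neighborhood a nearby point of A; use x itself if x ∈ A
  have hsel : ∀ x : NbhdOf A R, ∃ a : A, dist (x : X) (a : X) < R ∧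
      (∀ h : (x : X) ∈ A, a = ⟨x, h⟩) := by
    intro x
    by_cases h : (x : X) ∈ A
    · exact ⟨⟨x, h⟩, by simpa using hR, fun _ => rfl⟩
    · obtain ⟨a, ha, hd⟩ := x.2
      exact ⟨⟨a, ha⟩, hd, fun h' => absurd h' h⟩
  choose sel hsel1 hsel2 using hsel
  refine ⟨c * R + b, by positivity, fun x => f (sel x), ?_, ?_, ?_⟩
  · intro x hx ha
    show f (sel ⟨x, hx⟩) = f ⟨x, ha⟩
    rw [hsel2 ⟨x, hx⟩ ha]
  · refine ⟨lam, lam * (2 * R) + M, hlam, by positivity, fun x y => ?_⟩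
    have h1 : dist (f (sel x)) (f (sel y)) ≤ lam * dist (sel x : X) (sel y : X) + M :=
      hf _ _
    have h2 : dist (sel x : X) (sel y : X) ≤ dist (x : X) (y : X) + 2 * R := by
      have := dist_triangle4 (sel x : X) (x : X) (y : X) (sel y : X)
      have hx := hsel1 x
      have hy := hsel1 y
      rw [dist_comm] at hx
      linarith
    show dist (f (sel x)) (f (sel y)) ≤ lam * dist x y + (lam * (2 * R) + M)
    rw [Subtype.dist_eq]
    nlinarith [hsel1 x, hsel1 y]
  · intro x
    have h1 := hlow (sel x)
    have h2 : dist (x : X) x₀ ≤ dist (sel x : X) x₀ + R := by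
      have := dist_triangle (x : X) (sel x : X) x₀
      have := hsel1 x
      linarith
    nlinarith
end

section
/- Let ℕ carry the metric inherited from ℝ with base point 0, and regard S¹ as the unit circle in ℂ. Define f : ℕ → S¹ by f(2n) = exp(i/√n) for n ≥ 1 and f(k) = 1 for all other k (i.e. for k odd and for k = 0). Then the function f' : ℕ → ℂ defined by f'(n) = n·f(n) is not asymptotically Lipschitz, yet f is Higson sublinear. -/
/-!
Along odd arguments `f` is `1`, and along even ones `f(2n) = exp(i/√n) → 1`, so `f` has a limit
at infinity; this alone forces `f` to be Higson sublinear. On the other hand, the step from `2n`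
to `2n + 1` moves `n ↦ n f(n)` by at least its imaginary part `2n sin(1/√n) ≥ (4/π)√n`, which is
unbounded, while an asymptotically Lipschitz map moves points at distance `1` by at most `λ + M`.
-/

open Filter Topology Bornology Complex
open scoped Real

theorem HigsonSublinear.of_tendsto_cobounded {X Y : Type*} [MetricSpace X] [MetricSpace Y]
    (x₀ : X) {f : X → Y} {c : Y} (hf : Tendsto f (cobounded X) (𝓝 c)) :
    HigsonSublinear x₀ f := by
  intro s _ x y hx hy _
  rw [Metric.tendsto_dist_right_atTop_iff] at hx hy
  simpa using (hf.comp hx).dist (hf.comp hy)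

lemma I_div_ofReal (r : ℝ) : I / (r : ℂ) = ((r⁻¹ : ℝ) : ℂ) * I := by
  push_cast
  ring

lemma tendsto_exp_I_div_sqrt_natCast :
    Tendsto (fun n : ℕ => exp (I / (Real.sqrt n : ℂ))) atTop (𝓝 1) := by
  have hinv : Tendsto (fun n : ℕ => (Real.sqrt n)⁻¹) atTop (𝓝 0) :=
    tendsto_inv_atTop_zero.comp (Real.tendsto_sqrt_atTop.comp tendsto_natCast_atTop_atTop)
  have hexp : Continuous fun t : ℝ => exp (t * I) := by fun_prop
  convert (hexp.tendsto 0).comp hinv using 2 with n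
  · simp [I_div_ofReal]
  · simp

lemma tendsto_two_mul_mul_sin_inv_sqrt :
    Tendsto (fun n : ℕ => 2 * n * Real.sin (Real.sqrt n)⁻¹) atTop atTop := by
  have hsqrt : Tendsto (fun n : ℕ => 4 / π * Real.sqrt n) atTop atTop :=
    (Real.tendsto_sqrt_atTop.comp tendsto_natCast_atTop_atTop).const_mul_atTop (by positivity)
  refine tendsto_atTop_mono' _ ((eventually_ge_atTop 1).mono fun n hn => ?_) hsqrt
  have hn' : (1 : ℝ) ≤ n := by exact_mod_cast hn
  have hpos : 0 < Real.sqrt n := Real.sqrt_pos.2 (by linarith)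
  have hinv_le : (Real.sqrt n)⁻¹ ≤ π / 2 :=
    (inv_le_one_of_one_le₀ (Real.one_le_sqrt.2 hn')).trans (by linarith [Real.pi_gt_three])
  have hjordan := Real.mul_le_sin (inv_nonneg.2 hpos.le) hinv_le
  calc 4 / π * Real.sqrt n = 2 * n * (2 / π * (Real.sqrt n)⁻¹) := by
        field_simp
        rw [Real.sq_sqrt (by positivity)]
        ring
    _ ≤ 2 * n * Real.sin (Real.sqrt n)⁻¹ := by gcongr

namespace InvSqrtPhase

variable {f : ℕ → ℂ} (h1 : ∀ n : ℕ, 1 ≤ n → f (2 * n) = exp (I / (Real.sqrt n : ℂ)))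
  (h2 : ∀ n : ℕ, Odd n → f n = 1)
include h1 h2

lemma norm_sub_one_le {k : ℕ} (hk : 2 ≤ k) :
    ‖f k - 1‖ ≤ ‖exp (I / (Real.sqrt (k / 2 : ℕ) : ℂ)) - 1‖ := by
  rcases Nat.even_or_odd' k with ⟨j, rfl | rfl⟩
  · rw [h1 j (by omega), Nat.mul_div_cancel_left j two_pos]
  · simp [h2 _ (odd_two_mul_add_one j)]

lemma tendsto_one : Tendsto f atTop (𝓝 1) := by
  have hhalf := tendsto_exp_I_div_sqrt_natCast.comp (Nat.tendsto_div_const_atTop two_ne_zero)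
  rw [tendsto_iff_norm_sub_tendsto_zero] at hhalf ⊢
  exact squeeze_zero' (Eventually.of_forall fun _ => norm_nonneg _)
    ((eventually_ge_atTop 2).mono fun _ => norm_sub_one_le h1 h2) hhalf

lemma two_mul_mul_sin_le_norm_sub {n : ℕ} (hn : 1 ≤ n) :
    2 * n * Real.sin (Real.sqrt n)⁻¹ ≤
      ‖((2 * n : ℕ) : ℂ) * f (2 * n) - ((2 * n + 1 : ℕ) : ℂ) * f (2 * n + 1)‖ := by
  have him : (((2 * n : ℕ) : ℂ) * f (2 * n) - ((2 * n + 1 : ℕ) : ℂ) * f (2 * n + 1)).im =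
      2 * n * Real.sin (Real.sqrt n)⁻¹ := by
    rw [h1 n hn, h2 _ (odd_two_mul_add_one n), I_div_ofReal]
    simp only [sub_im, mul_im, exp_ofReal_mul_I_re, exp_ofReal_mul_I_im, natCast_re, natCast_im,
      one_re, one_im]
    push_cast
    ring
  rw [← him]
  exact (le_abs_self _).trans (abs_im_le_norm _)

end InvSqrtPhase

theorem stmt_17_general (f : ℕ → ℂ)
    (h1 : ∀ n : ℕ, 1 ≤ n → f (2 * n) = Complex.exp (Complex.I / (Real.sqrt n : ℂ)))
    (h2 : ∀ n : ℕ, Odd n → f n = 1) :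
    (¬ ∃ lam M : ℝ, 0 ≤ lam ∧ 0 ≤ M ∧
        ∀ x y : ℕ, ‖(x : ℂ) * f x - (y : ℂ) * f y‖ ≤ lam * dist x y + M) ∧
    HigsonSublinear (0 : ℕ) f := by
  refine ⟨?_, HigsonSublinear.of_tendsto_cobounded 0 (c := 1) ?_⟩
  · rintro ⟨lam, M, -, -, hLip⟩
    obtain ⟨n, hlarge, hn⟩ :=
      ((tendsto_two_mul_mul_sin_inv_sqrt.eventually_gt_atTop (lam + M)).and
        (eventually_ge_atTop 1)).exists
    have hstep := hLip (2 * n) (2 * n + 1)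
    have hdist : dist (2 * n) (2 * n + 1) = 1 := by simp [Nat.dist_eq]
    rw [hdist, mul_one] at hstep
    linarith [InvSqrtPhase.two_mul_mul_sin_le_norm_sub h1 h2 hn]
  · rw [IsOrderBornology.cobounded_eq_atTop]
    exact InvSqrtPhase.tendsto_one h1 h2

/-- for `f : ℕ → S¹ ⊂ ℂ` with `f(2n) = exp(i/√n)` for `n ≥ 1` and `f = 1`
elsewhere, the map `f'(n) = n·f(n)` is not asymptotically Lipschitz, yet `f` is Higson
sublinear (base point `0 ∈ ℕ`). -/
theorem stmt_17 (f : ℕ → ℂ)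
    (h1 : ∀ n : ℕ, 1 ≤ n → f (2 * n) = Complex.exp (Complex.I / (Real.sqrt n : ℂ)))
    (h2 : ∀ n : ℕ, Odd n → f n = 1) (h3 : f 0 = 1) :
    (¬ ∃ lam M : ℝ, 0 ≤ lam ∧ 0 ≤ M ∧
        ∀ x y : ℕ, ‖(x : ℂ) * f x - (y : ℂ) * f y‖ ≤ lam * dist x y + M) ∧
    HigsonSublinear (0 : ℕ) f :=
  stmt_17_general f h1 h2
end

section
/- Let (X,d) be a pointed metric space, let k ≥ 1 and ε > 0, and let f, g : X → [0,∞) be k-Lipschitz functions with f(x) + g(x) ≥ ε·|x| for all x ∈ X. Set h := f/(f+g) (defined wherever f+g > 0, in particular at every x with |x| > 0). Then: (i) for all x, y ∈ X with |x| ≥ |y| > 0, |h(x) − h(y)| ≤ 3k·d(x,y)/(ε·|y|); and (ii) the function x ↦ |x|·h(x) (defined to be 0 at the base point) is (3k/ε + 1)-Lipschitz on X. -/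
/-!
Writing `a = f x, b = g x, c = f y, e = g y`, the numerator of `a/(a+b) - c/(c+e)` is
`a (e - b) + b (a - c)`, which is at most `(a + b) k d(x,y)`; dividing by `(a + b)(c + e)` and using
`c + e ≥ ε|y|` gives (i), even with `k` in place of `3k`. For (ii), split
`|x| h(x) - |y| h(y) = (|x| - |y|) h(x) + |y| (h(x) - h(y))` with `|y| ≤ |x|`: the first term is at
most `d(x,y)` because `0 ≤ h ≤ 1`, the second at most `k d(x,y)/ε` by (i).
-/

theorem abs_div_add_sub_div_add_le {a b c e δ : ℝ} (ha : 0 ≤ a) (hb : 0 ≤ b)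
    (hab : 0 < a + b) (hce : 0 < c + e) (hac : |a - c| ≤ δ) (hbe : |b - e| ≤ δ) :
    |a / (a + b) - c / (c + e)| ≤ δ / (c + e) := by
  have hnum : |a * (c + e) - (a + b) * c| ≤ (a + b) * δ :=
    calc |a * (c + e) - (a + b) * c| = |a * (e - b) + b * (a - c)| := by ring_nf
      _ ≤ |a * (e - b)| + |b * (a - c)| := abs_add_le _ _
      _ = a * |b - e| + b * |a - c| := by
        rw [abs_mul, abs_mul, abs_of_nonneg ha, abs_of_nonneg hb, abs_sub_comm e b]
      _ ≤ a * δ + b * δ := by gcongr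
      _ = (a + b) * δ := by ring
  rw [div_sub_div _ _ hab.ne' hce.ne', abs_div, abs_of_pos (mul_pos hab hce)]
  calc |a * (c + e) - (a + b) * c| / ((a + b) * (c + e))
      ≤ (a + b) * δ / ((a + b) * (c + e)) := by gcongr
    _ = δ / (c + e) := mul_div_mul_left _ _ hab.ne'

theorem abs_mul_sub_mul_le_of_mem_Icc {p q r s δ C : ℝ} (hp : p ∈ Set.Icc 0 1) (hs : 0 ≤ s)
    (hrs : |r - s| ≤ δ) (hpq : s * |p - q| ≤ C * δ) :
    |r * p - s * q| ≤ (C + 1) * δ :=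
  calc |r * p - s * q| = |(r - s) * p + s * (p - q)| := by ring_nf
    _ ≤ |(r - s) * p| + |s * (p - q)| := abs_add_le _ _
    _ = |r - s| * |p| + s * |p - q| := by rw [abs_mul, abs_mul, abs_of_nonneg hs]
    _ ≤ δ * 1 + C * δ := by
      gcongr
      · exact (abs_nonneg _).trans hrs
      · exact abs_le.mpr ⟨by linarith [hp.1], hp.2⟩
    _ = (C + 1) * δ := by ring

section

variable {X : Type*} [PseudoMetricSpace X] {x₀ : X} {k ε : ℝ} {f g : X → ℝ}

theorem abs_ratio_sub_ratio_le (hε : 0 < ε) (hf0 : ∀ x, 0 ≤ f x) (hg0 : ∀ x, 0 ≤ g x)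
    (hfLip : ∀ x y, |f x - f y| ≤ k * dist x y) (hgLip : ∀ x y, |g x - g y| ≤ k * dist x y)
    (hlow : ∀ x, ε * dist x x₀ ≤ f x + g x) {x y : X} (hy : 0 < dist y x₀)
    (hyx : dist y x₀ ≤ dist x x₀) :
    |f x / (f x + g x) - f y / (f y + g y)| ≤ k * dist x y / (ε * dist y x₀) := by
  have hεy : 0 < ε * dist y x₀ := mul_pos hε hy
  have hεx : 0 < ε * dist x x₀ := mul_pos hε (hy.trans_le hyx)
  calc |f x / (f x + g x) - f y / (f y + g y)| ≤ k * dist x y / (f y + g y) :=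
        abs_div_add_sub_div_add_le (hf0 x) (hg0 x) (hεx.trans_le (hlow x))
          (hεy.trans_le (hlow y)) (hfLip x y) (hgLip x y)
    _ ≤ k * dist x y / (ε * dist y x₀) :=
        div_le_div_of_nonneg_left ((abs_nonneg _).trans (hfLip x y)) hεy (hlow y)

theorem abs_dist_mul_ratio_sub_le (hε : 0 < ε) (hf0 : ∀ x, 0 ≤ f x) (hg0 : ∀ x, 0 ≤ g x)
    (hfLip : ∀ x y, |f x - f y| ≤ k * dist x y) (hgLip : ∀ x y, |g x - g y| ≤ k * dist x y)
    (hlow : ∀ x, ε * dist x x₀ ≤ f x + g x) {x y : X} (hyx : dist y x₀ ≤ dist x x₀) :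
    |dist x x₀ * (f x / (f x + g x)) - dist y x₀ * (f y / (f y + g y))| ≤
      (k / ε + 1) * dist x y := by
  have hkd : 0 ≤ k * dist x y := (abs_nonneg _).trans (hfLip x y)
  have hratio : f x / (f x + g x) ∈ Set.Icc 0 1 :=
    ⟨div_nonneg (hf0 x) (add_nonneg (hf0 x) (hg0 x)),
      div_le_one_of_le₀ (le_add_of_nonneg_right (hg0 x)) (add_nonneg (hf0 x) (hg0 x))⟩
  refine abs_mul_sub_mul_le_of_mem_Icc hratio dist_nonneg (abs_dist_sub_le x y x₀) ?_
  rcases (dist_nonneg (x := y) (y := x₀)).eq_or_lt with hy | hy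
  · rw [← hy, zero_mul, div_mul_eq_mul_div]
    exact div_nonneg hkd hε.le
  · calc dist y x₀ * |f x / (f x + g x) - f y / (f y + g y)|
        ≤ dist y x₀ * (k * dist x y / (ε * dist y x₀)) :=
          mul_le_mul_of_nonneg_left
            (abs_ratio_sub_ratio_le hε hf0 hg0 hfLip hgLip hlow hy hyx) hy.le
      _ = k / ε * dist x y := by field_simp

end

theorem stmt_18_general {X : Type*} [MetricSpace X] (x₀ : X) (k ε : ℝ)
    (hε : 0 < ε)
    (f g : X → ℝ) (hf0 : ∀ x, 0 ≤ f x) (hg0 : ∀ x, 0 ≤ g x)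
    (hfLip : ∀ x y, |f x - f y| ≤ k * dist x y)
    (hgLip : ∀ x y, |g x - g y| ≤ k * dist x y)
    (hlow : ∀ x, ε * dist x x₀ ≤ f x + g x) :
    (∀ x y : X, 0 < dist y x₀ → dist y x₀ ≤ dist x x₀ →
      |f x / (f x + g x) - f y / (f y + g y)| ≤ 3 * k * dist x y / (ε * dist y x₀)) ∧
    (∀ x y : X,
      |dist x x₀ * (f x / (f x + g x)) - dist y x₀ * (f y / (f y + g y))| ≤
        (3 * k / ε + 1) * dist x y) := by
  have h3k (x y : X) : k * dist x y ≤ 3 * k * dist x y := by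
    linarith [(abs_nonneg _).trans (hfLip x y)]
  constructor
  · intro x y hy hyx
    exact (abs_ratio_sub_ratio_le hε hf0 hg0 hfLip hgLip hlow hy hyx).trans
      (div_le_div_of_nonneg_right (h3k x y) (mul_pos hε hy).le)
  · intro x y
    have hweaker : (k / ε + 1) * dist x y ≤ (3 * k / ε + 1) * dist x y := by
      have := div_le_div_of_nonneg_right (h3k x y) hε.le
      linarith [show k / ε * dist x y = k * dist x y / ε by ring,
        show 3 * k / ε * dist x y = 3 * k * dist x y / ε by ring]
    refine le_trans ?_ hweaker
    rcases le_total (dist y x₀) (dist x x₀) with hyx | hxy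
    · exact abs_dist_mul_ratio_sub_le hε hf0 hg0 hfLip hgLip hlow hyx
    · rw [abs_sub_comm, dist_comm x y]
      exact abs_dist_mul_ratio_sub_le hε hf0 hg0 hfLip hgLip hlow hxy

/-- if `f, g : X → [0,∞)` are `k`-Lipschitz (`k ≥ 1`) with
`f(x) + g(x) ≥ ε·|x|` and `h = f/(f+g)`, then
(i) `|h(x) − h(y)| ≤ 3k·d(x,y)/(ε·|y|)` whenever `|x| ≥ |y| > 0`, and
(ii) `x ↦ |x|·h(x)` is `(3k/ε + 1)`-Lipschitz. -/
theorem stmt_18 {X : Type*} [MetricSpace X] (x₀ : X) (k ε : ℝ)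
    (hk : 1 ≤ k) (hε : 0 < ε)
    (f g : X → ℝ) (hf0 : ∀ x, 0 ≤ f x) (hg0 : ∀ x, 0 ≤ g x)
    (hfLip : ∀ x y, |f x - f y| ≤ k * dist x y)
    (hgLip : ∀ x y, |g x - g y| ≤ k * dist x y)
    (hlow : ∀ x, ε * dist x x₀ ≤ f x + g x) :
    (∀ x y : X, 0 < dist y x₀ → dist y x₀ ≤ dist x x₀ →
      |f x / (f x + g x) - f y / (f y + g y)| ≤ 3 * k * dist x y / (ε * dist y x₀)) ∧
    (∀ x y : X,
      |dist x x₀ * (f x / (f x + g x)) - dist y x₀ * (f y / (f y + g y))| ≤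
        (3 * k / ε + 1) * dist x y) :=
  stmt_18_general x₀ k ε hε f g hf0 hg0 hfLip hgLip hlow
end
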